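/- arXiv:1401.2655 — 6 statements merged into one kernel-verified Lean document; each statement's English description precedes it below -/
import Mathlib

section
/- Let p, q > 1 be real numbers with 1/p + 1/q = 1. Then for all x, y₁, y₂ ∈ ℝ² with x ≠ y₁ and x ≠ y₂, one has |K(x − y₁) − K(x − y₂)| ≤ 2^{1/p} · |y₁ − y₂|^{1/q} / (2π · min(|x − y₁|, |x − y₂|)^{2 − 1/p}). -/
open MeasureTheory

noncomputable section

abbrev E2 : Type := EuclideanSpace ℝ (Fin 2)

/-- The planar Biot–Savart kernel `K(z) = z⊥ / (2π|z|²)`, where `z⊥ = (-z₂, z₁)`.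
(With the junk-value convention `(0 : ℝ)⁻¹ = 0`, this gives `K 0 = 0`.) -/
def K (z : E2) : E2 :=
  (2 * Real.pi * ‖z‖ ^ 2)⁻¹ • (WithLp.equiv 2 (Fin 2 → ℝ)).symm ![-(z 1), z 0]

/-!
`K = (2π)⁻¹ • perp ∘ inversion 0 1`, and inversion in the unit circle scales distances:
`‖a / ‖a‖² - b / ‖b‖²‖ = ‖a - b‖ / (‖a‖ ‖b‖)`. So with `m = min ‖a‖ ‖b‖`, the quantity
`2π ‖K a - K b‖` is at most `2 / m` (triangle inequality) and at most `‖a - b‖ / m²`;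
interpolating these two bounds with weights `1/p` and `1/q` gives the estimate.
-/

open Real EuclideanGeometry

def perp : E2 →ₗᵢ[ℝ] E2 where
  toFun z := (WithLp.equiv 2 (Fin 2 → ℝ)).symm ![-(z 1), z 0]
  map_add' z w := by ext i; fin_cases i <;> simp; ring
  map_smul' c z := by ext i; fin_cases i <;> simp
  norm_map' z := by simp [EuclideanSpace.norm_eq, Fin.sum_univ_two, add_comm]

theorem K_eq_smul_perp_inversion (z : E2) : K z = (2 * π)⁻¹ • perp (inversion 0 1 z) := by
  simp [K, inversion, perp, smul_smul, mul_comm]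

theorem norm_K_sub_K {a b : E2} (ha : a ≠ 0) (hb : b ≠ 0) :
    ‖K a - K b‖ = ‖a - b‖ / (2 * π * (‖a‖ * ‖b‖)) := by
  rw [K_eq_smul_perp_inversion, K_eq_smul_perp_inversion, ← smul_sub, ← map_sub, norm_smul,
    LinearIsometry.norm_map, ← dist_eq_norm, dist_inversion_inversion ha hb]
  rw [norm_inv, norm_of_nonneg two_pi_pos.le, dist_zero_right, dist_zero_right, dist_eq_norm]
  field_simp

theorem le_rpow_mul_rpow_of_le_of_le {D A B θ η : ℝ} (hD : 0 ≤ D) (hA : D ≤ A) (hB : D ≤ B)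
    (hθ : 0 ≤ θ) (hη : 0 ≤ η) (hθη : θ + η = 1) : D ≤ A ^ θ * B ^ η :=
  calc D = D ^ θ * D ^ η := by rw [← rpow_add' hD (by rw [hθη]; norm_num), hθη, rpow_one]
    _ ≤ A ^ θ * B ^ η := mul_le_mul (rpow_le_rpow hD hA hθ) (rpow_le_rpow hD hB hη)
        (rpow_nonneg hD _) (rpow_nonneg (hD.trans hA) _)

section OrderedField

variable {𝕜 : Type*} [Field 𝕜] [LinearOrder 𝕜] [IsStrictOrderedRing 𝕜]

theorem div_mul_le_two_div_min {s t d : 𝕜} (hs : 0 < s) (ht : 0 < t) (hd : d ≤ s + t) :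
    d / (s * t) ≤ 2 / min s t :=
  calc d / (s * t) ≤ (s + t) / (s * t) := by gcongr
    _ = 1 / t + 1 / s := by field_simp
    _ ≤ 1 / min s t + 1 / min s t := by gcongr; exacts [min_le_right s t, min_le_left s t]
    _ = 2 / min s t := by ring

theorem div_mul_le_div_min_sq {s t d : 𝕜} (hs : 0 < s) (ht : 0 < t) (hd : 0 ≤ d) :
    d / (s * t) ≤ d / min s t ^ 2 := by
  rw [sq]
  gcongr
  exacts [min_le_left s t, min_le_right s t]

end OrderedField

theorem div_rpow_mul_div_sq_rpow {m c d θ η : ℝ} (hm : 0 < m) (hc : 0 ≤ c) (hd : 0 ≤ d)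
    (hθη : θ + η = 1) : (c / m) ^ θ * (d / m ^ 2) ^ η = c ^ θ * d ^ η / m ^ (2 - θ) := by
  have hexp : θ + 2 * η = 2 - θ := by linarith
  rw [div_rpow hc hm.le, div_rpow hd (by positivity), ← rpow_natCast_mul hm.le,
    div_mul_div_comm, ← rpow_add hm, Nat.cast_ofNat, hexp]

/-- Hölder-type estimate for the difference of the Biot–Savart kernel at two points. -/
theorem K_difference_holder_bound (p q : ℝ) (hp : 1 < p) (hq : 1 < q)
    (hpq : 1 / p + 1 / q = 1) (x y₁ y₂ : E2) (h₁ : x ≠ y₁) (h₂ : x ≠ y₂) :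
    ‖K (x - y₁) - K (x - y₂)‖ ≤
      2 ^ (1 / p) * ‖y₁ - y₂‖ ^ (1 / q) /
        (2 * Real.pi * min ‖x - y₁‖ ‖x - y₂‖ ^ (2 - 1 / p)) := by
  have ha : 0 < ‖x - y₁‖ := norm_pos_iff.mpr (sub_ne_zero.mpr h₁)
  have hb : 0 < ‖x - y₂‖ := norm_pos_iff.mpr (sub_ne_zero.mpr h₂)
  have hm : 0 < min ‖x - y₁‖ ‖x - y₂‖ := lt_min ha hb
  have hdiff : ‖(x - y₁) - (x - y₂)‖ = ‖y₁ - y₂‖ := by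
    rw [sub_sub_sub_cancel_left, norm_sub_rev]
  have hK : 2 * π * ‖K (x - y₁) - K (x - y₂)‖ = ‖y₁ - y₂‖ / (‖x - y₁‖ * ‖x - y₂‖) := by
    rw [norm_K_sub_K (sub_ne_zero.mpr h₁) (sub_ne_zero.mpr h₂), hdiff]
    field_simp
  have hbound := le_rpow_mul_rpow_of_le_of_le (by positivity)
    (hK ▸ div_mul_le_two_div_min ha hb (hdiff ▸ norm_sub_le _ _))
    (hK ▸ div_mul_le_div_min_sq ha hb (norm_nonneg _))
    (by positivity) (by positivity) hpq
  rw [div_rpow_mul_div_sq_rpow hm zero_le_two (norm_nonneg _) hpq, le_div_iff₀ (by positivity)]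
    at hbound
  rw [le_div_iff₀ (by positivity)]
  linarith

end
end

section
/- Let X₁ and X₂ be homeomorphisms of ℝ² onto itself, each preserving two-dimensional Lebesgue measure, let δ := sup_{z ∈ ℝ²} |X₁(z) − X₂(z)|, and assume 0 < δ < e^{−1}. Let U ⊆ ℝ² be measurable with finite Lebesgue measure. Then there exists a constant C > 0, depending only on the Lebesgue measure of U, such that for every x ∈ ℝ²: ∫_U |K(x − X₁(z)) − K(x − X₂(z))| dz ≤ −C · δ · log δ. -/
/-! Put `a = x - X₁ z` and `b = x - X₂ z`, so `‖a - b‖ ≤ δ`. If `‖a‖ ≤ 2δ` then `‖b‖ ≤ 3δ`, and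
`‖K a - K b‖ ≤ ‖K a‖ + ‖K b‖`. Otherwise `‖b‖ ≥ ‖a‖/2`, and since inversion `w ↦ w/‖w‖²` turns
distances into `‖a - b‖/(‖a‖‖b‖)`, `‖K a - K b‖ ≤ δ/(π‖a‖²)`, which is at most `δ/π` once
`‖a‖ > 1`. As `z ↦ x - Xᵢ z` preserves Lebesgue measure, the integral over `U` of each of these
radial majorants is at most its integral over the plane, computed in polar coordinates:
`∫_{‖w‖ ≤ R} ‖K w‖ = R` and `∫_{2δ < ‖w‖ ≤ 1} δ/(π‖w‖²) = 2δ log(1/(2δ))`, while the constant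
`δ/π` contributes `δ |U| / π`. Everything is `O(δ log(1/δ))` because `log(1/δ) ≥ 1`. -/

open MeasureTheory

noncomputable section

open Metric Set Real
open scoped ENNReal

namespace MeasureTheory

variable {E : Type*} [NormedAddCommGroup E] [NormedSpace ℝ E] [FiniteDimensional ℝ E]
  [MeasurableSpace E] [BorelSpace E] [Nontrivial E] (μ : Measure E) [μ.IsAddHaarMeasure]

theorem lintegral_fun_norm_addHaar {f : ℝ → ℝ≥0∞} (hf : Measurable f) :
    ∫⁻ x, f ‖x‖ ∂μ = Module.finrank ℝ E * μ (ball 0 1) *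
      ∫⁻ r in Ioi 0, ENNReal.ofReal (r ^ (Module.finrank ℝ E - 1)) * f r := by
  calc ∫⁻ x, f ‖x‖ ∂μ = ∫⁻ x : ({(0)}ᶜ : Set E), f ‖x.1‖ ∂(μ.comap (↑)) := by
        rw [lintegral_subtype_comap (measurableSet_singleton _).compl (fun x => f ‖x‖),
          restrict_compl_singleton]
    _ = ∫⁻ x, f x.2 ∂μ.toSphere.prod (.volumeIoiPow (Module.finrank ℝ E - 1)) := by
        simpa using (μ.measurePreserving_homeomorphUnitSphereProd.lintegral_comp_emb
          (Homeomorph.measurableEmbedding _) (f ∘ Subtype.val ∘ Prod.snd))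
    _ = μ.toSphere univ * ∫⁻ r, f r ∂(.volumeIoiPow (Module.finrank ℝ E - 1)) := by
        rw [lintegral_prod (fun x : sphere (0 : E) 1 × Ioi (0 : ℝ) => f x.2)
            (hf.comp (measurable_subtype_coe.comp measurable_snd)).aemeasurable]
        dsimp only
        rw [lintegral_const, mul_comm]
    _ = _ := by
        rw [μ.toSphere_apply_univ, Measure.volumeIoiPow,
          lintegral_withDensity_eq_lintegral_mul_non_measurable _ (by fun_prop)
            (.of_forall fun _ => ENNReal.ofReal_lt_top)]
        exact congrArg _ (lintegral_subtype_comap measurableSet_Ioi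
          (fun r => ENNReal.ofReal (r ^ (Module.finrank ℝ E - 1)) * f r))

theorem integral_norm_le_of_lintegral_enorm_le {α F : Type*} [MeasurableSpace α] {μ : Measure α}
    [NormedAddCommGroup F] {f : α → F} {C : ℝ} (hC : 0 ≤ C)
    (h : ∫⁻ a, ‖f a‖ₑ ∂μ ≤ ENNReal.ofReal C) : ∫ a, ‖f a‖ ∂μ ≤ C := by
  have hle := (enorm_integral_le_lintegral_enorm fun a => ‖f a‖).trans (by simpa using h)
  rw [Real.enorm_eq_ofReal_abs, ENNReal.ofReal_le_ofReal_iff hC] at hle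
  exact (le_abs_self _).trans hle

end MeasureTheory

namespace EuclideanSpace

theorem lintegral_fun_norm_fin_two {f : ℝ → ℝ≥0∞} (hf : Measurable f) :
    ∫⁻ w : EuclideanSpace ℝ (Fin 2), f ‖w‖ =
      ENNReal.ofReal (2 * π) * ∫⁻ r in Ioi 0, ENNReal.ofReal r * f r := by
  rw [lintegral_fun_norm_addHaar volume hf, finrank_euclideanSpace_fin,
    volume_ball_fin_two, ENNReal.ofReal_mul zero_le_two]
  simp

theorem lintegral_indicator_Iic_inv_two_pi_mul_norm (R : ℝ) :
    ∫⁻ w : EuclideanSpace ℝ (Fin 2), (Iic R).indicator (fun r => ENNReal.ofReal (2 * π * r)⁻¹) ‖w‖ =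
      ENNReal.ofReal R := by
  have h : ∀ r ∈ Ioi (0 : ℝ), ENNReal.ofReal r *
      (Iic R).indicator (fun r => ENNReal.ofReal (2 * π * r)⁻¹) r =
      (Iic R).indicator (fun _ => ENNReal.ofReal (2 * π)⁻¹) r := by
    intro r (hr : 0 < r)
    by_cases hrR : r ∈ Iic R
    · simp only [indicator_of_mem hrR, ← ENNReal.ofReal_mul hr.le]
      congr 1
      field_simp
    · simp [indicator_of_notMem hrR]
  rw [lintegral_fun_norm_fin_two ((by fun_prop : Measurable _).indicator measurableSet_Iic),
    setLIntegral_congr_fun measurableSet_Ioi h, lintegral_indicator_const measurableSet_Iic,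
    Measure.restrict_apply measurableSet_Iic, Iic_inter_Ioi, Real.volume_Ioc, sub_zero,
    ← mul_assoc, ← ENNReal.ofReal_mul (by positivity), mul_inv_cancel₀ (by positivity),
    ENNReal.ofReal_one, one_mul]

theorem lintegral_indicator_Ioc_div_norm_sq {c ε : ℝ} (hc : 0 ≤ c) (hε : 0 < ε)
    (hε₁ : ε ≤ 1) :
    ∫⁻ w : EuclideanSpace ℝ (Fin 2), (Ioc ε 1).indicator (fun r => ENNReal.ofReal (c / r ^ 2)) ‖w‖ =
      ENNReal.ofReal (2 * π * c * log ε⁻¹) := by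
  have h : ∀ r ∈ Ioi (0 : ℝ), ENNReal.ofReal r *
      (Ioc ε 1).indicator (fun r => ENNReal.ofReal (c / r ^ 2)) r =
      (Ioc ε 1).indicator (fun r => ENNReal.ofReal (c * r⁻¹)) r := by
    intro r (hr : 0 < r)
    by_cases hrε : r ∈ Ioc ε 1
    · simp only [indicator_of_mem hrε, ← ENNReal.ofReal_mul hr.le]
      congr 1
      field_simp
    · simp [indicator_of_notMem hrε]
  have hint : ∫ r in Ioc ε 1, c * r⁻¹ = c * log ε⁻¹ := by
    rw [← intervalIntegral.integral_of_le hε₁, intervalIntegral.integral_const_mul,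
      integral_inv_of_pos hε one_pos, one_div]
  have hintegrable : IntegrableOn (fun r => c * r⁻¹) (Ioc ε 1) :=
    (intervalIntegrable_iff_integrableOn_Ioc_of_le hε₁).1
      ((intervalIntegral.intervalIntegrable_inv (fun r hr =>
        (hε.trans_le ((le_min le_rfl hε₁).trans hr.1)).ne') continuousOn_id).const_mul c)
  have hnonneg : 0 ≤ᵐ[volume.restrict (Ioc ε 1)] fun r => c * r⁻¹ :=
    ae_restrict_of_forall_mem measurableSet_Ioc fun r hr =>
      mul_nonneg hc (inv_nonneg.2 (hε.trans hr.1).le)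
  rw [lintegral_fun_norm_fin_two ((by fun_prop : Measurable _).indicator measurableSet_Ioc),
    setLIntegral_congr_fun measurableSet_Ioi h, lintegral_indicator measurableSet_Ioc,
    Measure.restrict_restrict measurableSet_Ioc, Ioc_inter_Ioi, max_eq_left hε.le,
    ← ofReal_integral_eq_lintegral_ofReal hintegrable hnonneg, hint,
    ← ENNReal.ofReal_mul (by positivity)]
  ring_nf

end EuclideanSpace

namespace BiotSavart

def perp : E2 →ₗ[ℝ] E2 where
  toFun z := (WithLp.equiv 2 (Fin 2 → ℝ)).symm ![-(z 1), z 0]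
  map_add' a b := by
    ext i
    fin_cases i <;> simp [WithLp.equiv_symm_apply]
    ring
  map_smul' c a := by
    ext i
    fin_cases i <;> simp [WithLp.equiv_symm_apply]

theorem norm_perp (z : E2) : ‖perp z‖ = ‖z‖ := by
  simp [perp, EuclideanSpace.norm_eq, Fin.sum_univ_two, WithLp.equiv_symm_apply, add_comm]

theorem K_eq_smul_perp (z : E2) : K z = (2 * π * ‖z‖ ^ 2)⁻¹ • perp z := rfl

theorem norm_K (z : E2) : ‖K z‖ = (2 * π * ‖z‖)⁻¹ := by
  rw [K_eq_smul_perp, norm_smul, norm_perp, norm_inv, Real.norm_of_nonneg (by positivity)]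
  rcases eq_or_ne ‖z‖ 0 with hz | hz
  · simp [hz]
  · field_simp

theorem enorm_K (z : E2) : ‖K z‖ₑ = ENNReal.ofReal (2 * π * ‖z‖)⁻¹ := by
  rw [← ofReal_norm, norm_K]

theorem norm_K_sub_K {a b : E2} (ha : a ≠ 0) (hb : b ≠ 0) :
    ‖K a - K b‖ = ‖a - b‖ / (2 * π * (‖a‖ * ‖b‖)) := by
  have hinv := dist_div_norm_sq_smul ha hb 1
  simp only [one_div, inv_pow, one_pow, dist_eq_norm] at hinv
  have hna : ‖a‖ ≠ 0 := norm_ne_zero_iff.2 ha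
  have hnb : ‖b‖ ≠ 0 := norm_ne_zero_iff.2 hb
  have hK : K a - K b = (2 * π)⁻¹ • perp ((‖a‖ ^ 2)⁻¹ • a - (‖b‖ ^ 2)⁻¹ • b) := by
    simp only [K_eq_smul_perp, map_sub, map_smul, smul_sub, smul_smul, mul_inv]
  rw [hK, norm_smul, norm_perp, hinv, norm_inv, Real.norm_of_nonneg (by positivity)]
  field_simp

theorem norm_K_sub_K_le_of_two_mul_lt {a b : E2} {δ : ℝ} (hab : ‖a - b‖ ≤ δ)
    (ha : 2 * δ < ‖a‖) : ‖K a - K b‖ ≤ δ / π / ‖a‖ ^ 2 := by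
  have hδ : 0 ≤ δ := (norm_nonneg _).trans hab
  have hb : ‖a‖ / 2 ≤ ‖b‖ := by
    linarith [norm_sub_norm_le a b]
  have ha₀ : 0 < ‖a‖ := by linarith
  rw [norm_K_sub_K (norm_pos_iff.1 ha₀) (norm_pos_iff.1 (by linarith)), div_div]
  refine div_le_div₀ hδ hab (by positivity) ?_
  calc π * ‖a‖ ^ 2 = 2 * π * (‖a‖ * (‖a‖ / 2)) := by ring
    _ ≤ 2 * π * (‖a‖ * ‖b‖) := by gcongr

theorem enorm_K_sub_K_le {a b : E2} {δ : ℝ} (hab : ‖a - b‖ ≤ δ) :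
    ‖K a - K b‖ₑ ≤ (Iic (2 * δ)).indicator (fun r => ENNReal.ofReal (2 * π * r)⁻¹) ‖a‖ +
      (Iic (3 * δ)).indicator (fun r => ENNReal.ofReal (2 * π * r)⁻¹) ‖b‖ +
      (Ioc (2 * δ) 1).indicator (fun r => ENNReal.ofReal (δ / π / r ^ 2)) ‖a‖ +
      ENNReal.ofReal (δ / π) := by
  by_cases hnear : ‖a‖ ≤ 2 * δ
  · have hb : ‖b‖ ≤ 3 * δ := by linarith [norm_le_norm_add_norm_sub' b a, norm_sub_rev a b]
    rw [indicator_of_mem (mem_Iic.2 hnear), indicator_of_mem (mem_Iic.2 hb), ← enorm_K, ← enorm_K]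
    exact (enorm_sub_le).trans (le_self_add.trans le_self_add)
  push Not at hnear
  have hfar := norm_K_sub_K_le_of_two_mul_lt hab hnear
  rw [← ofReal_norm]
  by_cases hmid : ‖a‖ ≤ 1
  · rw [indicator_of_mem (mem_Ioc.2 ⟨hnear, hmid⟩)]
    exact (ENNReal.ofReal_le_ofReal hfar).trans (le_add_self.trans le_self_add)
  · refine (ENNReal.ofReal_le_ofReal (hfar.trans ?_)).trans le_add_self
    have hδ : 0 ≤ δ := (norm_nonneg _).trans hab
    exact div_le_self (by positivity) (one_le_pow₀ (by linarith))

theorem lintegral_enorm_K_sub_K_le {Y₁ Y₂ : E2 → E2} (hY₁ : MeasurePreserving Y₁ volume volume)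
    (hY₂ : MeasurePreserving Y₂ volume volume) {δ : ℝ} (hδ : 0 < δ) (hδ₁ : 2 * δ ≤ 1)
    (hY : ∀ z, ‖Y₁ z - Y₂ z‖ ≤ δ) (U : Set E2) :
    ∫⁻ z in U, ‖K (Y₁ z) - K (Y₂ z)‖ₑ ≤
      ENNReal.ofReal (5 * δ + 2 * δ * log (2 * δ)⁻¹) + ENNReal.ofReal (δ / π) * volume U := by
  set near : ℝ → E2 → ℝ≥0∞ := fun R w =>
    (Iic R).indicator (fun r => ENNReal.ofReal (2 * π * r)⁻¹) ‖w‖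
  set far : E2 → ℝ≥0∞ := fun w =>
    (Ioc (2 * δ) 1).indicator (fun r => ENNReal.ofReal (δ / π / r ^ 2)) ‖w‖
  have hnear : ∀ R, Measurable (near R) := fun R =>
    ((by fun_prop : Measurable _).indicator measurableSet_Iic).comp measurable_norm
  have hfar : Measurable far :=
    ((by fun_prop : Measurable _).indicator measurableSet_Ioc).comp measurable_norm
  calc ∫⁻ z in U, ‖K (Y₁ z) - K (Y₂ z)‖ₑ
      ≤ ∫⁻ z in U, (near (2 * δ) (Y₁ z) + near (3 * δ) (Y₂ z) + far (Y₁ z) +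
          ENNReal.ofReal (δ / π)) :=
        lintegral_mono fun z => enorm_K_sub_K_le (hY z)
    _ = (∫⁻ z in U, near (2 * δ) (Y₁ z)) + (∫⁻ z in U, near (3 * δ) (Y₂ z)) +
          (∫⁻ z in U, far (Y₁ z)) + ENNReal.ofReal (δ / π) * volume U := by
        have hfar₁ : Measurable fun z => far (Y₁ z) := hfar.comp hY₁.measurable
        have hnear₂ : Measurable fun z => near (3 * δ) (Y₂ z) := (hnear _).comp hY₂.measurable
        rw [lintegral_add_right _ measurable_const, lintegral_add_right _ hfar₁,
          lintegral_add_right _ hnear₂, setLIntegral_const]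
    _ ≤ (∫⁻ z, near (2 * δ) (Y₁ z)) + (∫⁻ z, near (3 * δ) (Y₂ z)) + (∫⁻ z, far (Y₁ z)) +
          ENNReal.ofReal (δ / π) * volume U := by
        gcongr <;> exact Measure.restrict_le_self
    _ = ENNReal.ofReal (2 * δ) + ENNReal.ofReal (3 * δ) +
          ENNReal.ofReal (2 * π * (δ / π) * log (2 * δ)⁻¹) + ENNReal.ofReal (δ / π) * volume U := by
        rw [hY₁.lintegral_comp (hnear _), hY₂.lintegral_comp (hnear _), hY₁.lintegral_comp hfar,
          EuclideanSpace.lintegral_indicator_Iic_inv_two_pi_mul_norm,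
          EuclideanSpace.lintegral_indicator_Iic_inv_two_pi_mul_norm,
          EuclideanSpace.lintegral_indicator_Ioc_div_norm_sq (by positivity) (by positivity) hδ₁]
    _ = ENNReal.ofReal (5 * δ + 2 * δ * log (2 * δ)⁻¹) + ENNReal.ofReal (δ / π) * volume U := by
        have hlog : 0 ≤ log (2 * δ)⁻¹ := log_nonneg (one_le_inv₀ (by positivity) |>.2 hδ₁)
        rw [← ENNReal.ofReal_add (by positivity) (by positivity),
          ← ENNReal.ofReal_add (by positivity) (by positivity)]
        congr 2
        field_simp
        ring

theorem integral_norm_K_sub_K_le_neg_mul_log {Y₁ Y₂ : E2 → E2}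
    (hY₁ : MeasurePreserving Y₁ volume volume) (hY₂ : MeasurePreserving Y₂ volume volume)
    {δ : ℝ} (hδ : 0 < δ) (hδe : δ < exp (-1)) (hY : ∀ z, ‖Y₁ z - Y₂ z‖ ≤ δ) {U : Set E2}
    (hU : volume U ≠ ⊤) :
    ∫ z in U, ‖K (Y₁ z) - K (Y₂ z)‖ ≤ -((7 + (volume U).toReal) * δ * log δ) := by
  have hlog : 1 ≤ -log δ := by
    linarith [log_exp (-1) ▸ log_lt_log hδ hδe]
  have hδ₁ : 2 * δ ≤ 1 := by linarith [exp_neg_one_lt_half]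
  have hlog₂ : log (2 * δ)⁻¹ ≤ -log δ := by
    rw [log_inv, log_mul two_ne_zero hδ.ne']
    linarith [log_pos one_lt_two]
  have hlog₂' : 0 ≤ log (2 * δ)⁻¹ := log_nonneg ((one_le_inv₀ (by positivity)).2 hδ₁)
  have hU' : 0 ≤ (volume U).toReal := ENNReal.toReal_nonneg
  have hπ : δ / π ≤ δ := div_le_self hδ.le (by linarith [pi_gt_three])
  have key := lintegral_enorm_K_sub_K_le hY₁ hY₂ hδ hδ₁ hY U
  rw [← ENNReal.ofReal_toReal hU, ← ENNReal.ofReal_mul (by positivity),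
    ← ENNReal.ofReal_add (by positivity) (by positivity)] at key
  refine (integral_norm_le_of_lintegral_enorm_le (by positivity) key).trans ?_
  nlinarith [mul_le_mul_of_nonneg_left hlog₂ hδ.le, mul_le_mul_of_nonneg_right hπ hU',
    mul_le_mul_of_nonneg_left hlog (mul_nonneg hδ.le hU'), mul_le_mul_of_nonneg_left hlog hδ.le]

end BiotSavart

open BiotSavart in
/-- For measure-preserving homeomorphisms `X₁, X₂` of the plane that are uniformly close
(with `δ := sup_z |X₁ z − X₂ z|` satisfying `0 < δ < e⁻¹`), the `L¹` norm over a finite-measure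
set `U` of the difference of the shifted Biot–Savart kernels is at most `−Cδ log δ`,
with `C` depending only on the measure of `U`. -/
theorem K_flow_difference_L1_log_bound (m : ENNReal) (hm : m < ⊤) :
    ∃ C > 0, ∀ (X₁ X₂ : E2 ≃ₜ E2),
      MeasurePreserving X₁ volume volume →
      MeasurePreserving X₂ volume volume →
      0 < (⨆ z : E2, ‖X₁ z - X₂ z‖) →
      (⨆ z : E2, ‖X₁ z - X₂ z‖) < Real.exp (-1) →
      ∀ U : Set E2, MeasurableSet U → volume U = m →
      ∀ x : E2,
        ∫ z in U, ‖K (x - X₁ z) - K (x - X₂ z)‖ ≤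
          -(C * (⨆ z : E2, ‖X₁ z - X₂ z‖) * Real.log (⨆ z : E2, ‖X₁ z - X₂ z‖)) := by
  refine ⟨7 + m.toReal, by positivity, fun X₁ X₂ hX₁ hX₂ hδ hδe U _ hU x => ?_⟩
  have hbdd : BddAbove (range fun z => ‖X₁ z - X₂ z‖) :=
    not_not.1 fun h => hδ.ne' (Real.iSup_of_not_bddAbove h)
  have hY : ∀ z, ‖(x - X₁ z) - (x - X₂ z)‖ ≤ ⨆ z, ‖X₁ z - X₂ z‖ := fun z => by
    rw [sub_sub_sub_cancel_left, norm_sub_rev]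
    exact le_ciSup hbdd z
  subst hU
  exact integral_norm_K_sub_K_le_neg_mul_log ((volume.measurePreserving_sub_left x).comp hX₁)
    ((volume.measurePreserving_sub_left x).comp hX₂) hδ hδe hY hm.ne

end
end

section
/- Let x, y ∈ ℝ² with |x| > 1 and |y| ≥ 1, and let R > 0 be such that |x − y| ≤ R. Then x ≠ y* and |x − y| / |x − y*| ≤ max(2, 2R) ≤ 2(1 + R). -/
open MeasureTheory

noncomputable section

/-!
Expanding both squares gives the identity
`‖y‖² ‖x - y*‖² = ‖x - y‖² + (‖x‖² - 1)(‖y‖² - 1)`, so outside the unit ball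
`‖x - y‖ ≤ ‖y‖ ‖x - y*‖`; this bounds the ratio by `2` when `‖y‖ ≤ 2`. When `‖y‖ ≥ 2`, the point
`y*` lies in the ball of radius `1/2`, so `‖x - y*‖ ≥ 1/2` and the ratio is at most `2R`.
-/

section InnerProductSpace

variable {E : Type*} [NormedAddCommGroup E] [InnerProductSpace ℝ E]

def unitInversion (y : E) : E := (‖y‖ ^ 2)⁻¹ • y

theorem norm_unitInversion (y : E) : ‖unitInversion y‖ = ‖y‖⁻¹ := by
  rcases eq_or_ne y 0 with rfl | hy
  · simp [unitInversion]
  · have : ‖y‖ ≠ 0 := norm_ne_zero_iff.mpr hy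
    rw [unitInversion, norm_smul, norm_inv, norm_pow, norm_norm]
    field_simp

theorem norm_sq_mul_norm_sub_unitInversion_sq (x : E) {y : E} (hy : y ≠ 0) :
    ‖y‖ ^ 2 * ‖x - unitInversion y‖ ^ 2 = ‖x - y‖ ^ 2 + (‖x‖ ^ 2 - 1) * (‖y‖ ^ 2 - 1) := by
  have : ‖y‖ ≠ 0 := norm_ne_zero_iff.mpr hy
  rw [norm_sub_sq_real, norm_sub_sq_real, norm_unitInversion, unitInversion,
    real_inner_smul_right]
  field_simp
  ring

theorem norm_sub_le_norm_mul_norm_sub_unitInversion {x y : E} (hx : 1 ≤ ‖x‖) (hy : 1 ≤ ‖y‖) :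
    ‖x - y‖ ≤ ‖y‖ * ‖x - unitInversion y‖ := by
  have hy0 : y ≠ 0 := norm_pos_iff.mp (one_pos.trans_le hy)
  have hx1 : 0 ≤ ‖x‖ ^ 2 - 1 := by nlinarith
  have hy1 : 0 ≤ ‖y‖ ^ 2 - 1 := by nlinarith
  refine le_of_sq_le_sq ?_ (by positivity)
  rw [mul_pow, norm_sq_mul_norm_sub_unitInversion_sq x hy0]
  nlinarith [mul_nonneg hx1 hy1]

theorem norm_sub_norm_inv_le_norm_sub_unitInversion (x y : E) :
    ‖x‖ - ‖y‖⁻¹ ≤ ‖x - unitInversion y‖ :=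
  norm_unitInversion y ▸ norm_sub_norm_le x (unitInversion y)

theorem ne_unitInversion {x y : E} (hx : 1 < ‖x‖) (hy : 1 ≤ ‖y‖) : x ≠ unitInversion y := by
  rintro rfl
  rw [norm_unitInversion] at hx
  exact (inv_le_one_of_one_le₀ hy).not_gt hx

theorem norm_sub_le_mul_norm_sub_unitInversion {x y : E} (hx : 1 < ‖x‖) (hy : 1 ≤ ‖y‖) :
    ‖x - y‖ ≤ max 2 (2 * ‖x - y‖) * ‖x - unitInversion y‖ := by
  rcases le_total ‖y‖ 2 with hy2 | hy2
  · calc ‖x - y‖ ≤ ‖y‖ * ‖x - unitInversion y‖ :=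
          norm_sub_le_norm_mul_norm_sub_unitInversion hx.le hy
      _ ≤ 2 * ‖x - unitInversion y‖ := by gcongr
      _ ≤ _ := by gcongr; exact le_max_left _ _
  · have hinv : ‖y‖⁻¹ ≤ 1 / 2 := by
      rw [one_div]; exact inv_anti₀ two_pos hy2
    have hhalf : 1 / 2 ≤ ‖x - unitInversion y‖ := by
      linarith [norm_sub_norm_inv_le_norm_sub_unitInversion x y]
    calc ‖x - y‖ ≤ 2 * ‖x - y‖ * ‖x - unitInversion y‖ := by nlinarith [norm_nonneg (x - y)]
      _ ≤ _ := by gcongr; exact le_max_right _ _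

end InnerProductSpace

theorem inversion_distance_ratio_bound_general (x y : E2) (hx : 1 < ‖x‖) (hy : 1 ≤ ‖y‖)
    (R : ℝ) (hxy : ‖x - y‖ ≤ R) :
    x ≠ (‖y‖ ^ 2)⁻¹ • y ∧
    ‖x - y‖ / ‖x - (‖y‖ ^ 2)⁻¹ • y‖ ≤ max 2 (2 * R) ∧
    max 2 (2 * R) ≤ 2 * (1 + R) := by
  have hne : x ≠ unitInversion y := ne_unitInversion hx hy
  have hR : 0 ≤ R := (norm_nonneg _).trans hxy
  refine ⟨hne, ?_, max_le (by linarith) (by linarith)⟩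
  refine (div_le_iff₀ (norm_pos_iff.mpr (sub_ne_zero.mpr hne))).mpr ?_
  calc ‖x - y‖ ≤ max 2 (2 * ‖x - y‖) * ‖x - unitInversion y‖ :=
        norm_sub_le_mul_norm_sub_unitInversion hx hy
    _ ≤ max 2 (2 * R) * ‖x - unitInversion y‖ := by gcongr

/-- For `|x| > 1`, `|y| ≥ 1` and `|x − y| ≤ R`, the ratio `|x − y|/|x − y*|` is at most
`max(2, 2R) ≤ 2(1 + R)`, where `y* = y/|y|²` is the inversion in the unit circle. -/
theorem inversion_distance_ratio_bound (x y : E2) (hx : 1 < ‖x‖) (hy : 1 ≤ ‖y‖)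
    (R : ℝ) (hR : 0 < R) (hxy : ‖x - y‖ ≤ R) :
    x ≠ (‖y‖ ^ 2)⁻¹ • y ∧
    ‖x - y‖ / ‖x - (‖y‖ ^ 2)⁻¹ • y‖ ≤ max 2 (2 * R) ∧
    max 2 (2 * R) ≤ 2 * (1 + R) :=
  inversion_distance_ratio_bound_general x y hx hy R hxy
end
end

section
/- Let a : ℝ² → ℝ be a smooth function with 0 ≤ a ≤ 1 and with support contained in the closed ball of radius c > 0 centered at the origin, and for ε > 0 set a_ε(z) := a(z/ε). Then there exists a constant C > 0, depending only on a, such that for all x ∈ ℝ² with |x| > 1 and all ε > 0: ∫_{{y ∈ ℝ² : |y| > 1}} a_ε(x − y)·|K(x − y) − K(x − y*)| dy ≤ C(ε + ε²). -/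
open MeasureTheory Real Metric

open scoped ENNReal

set_option maxHeartbeats 1000000

noncomputable section

lemma vol_cb (w : E2) {r : ℝ} (hr : 0 ≤ r) :
    volume (closedBall w r) = ENNReal.ofReal (π * r ^ 2) := by
  rw [EuclideanSpace.volume_closedBall]
  rw [ENNReal.ofReal_mul Real.pi_nonneg, ← ENNReal.ofReal_pow hr]
  norm_num [Real.Gamma_two, Real.sq_sqrt Real.pi_nonneg, mul_comm]

lemma riesz_centered (w : E2) {R : ℝ} (hR : 0 < R) :
    ∫⁻ y in closedBall w R, ENNReal.ofReal ‖y - w‖⁻¹ ≤ ENNReal.ofReal (4 * π * R) := by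
  have hsub : closedBall w R ⊆ {w} ∪ ⋃ n : ℕ,
      (closedBall w (R * 2⁻¹ ^ n) \ ball w (R * 2⁻¹ ^ (n + 1))) := by
    intro y hy
    rcases eq_or_ne y w with rfl | hyw
    · exact Set.mem_union_left _ rfl
    right
    have hd : 0 < ‖y - w‖ := by simpa [sub_eq_zero] using hyw
    have hdR : ‖y - w‖ ≤ R := by simpa [mem_closedBall, dist_eq_norm] using hy
    have hex : ∃ n : ℕ, R * 2⁻¹ ^ n < ‖y - w‖ := by
      obtain ⟨n, hn⟩ := exists_pow_lt_of_lt_one (div_pos hd hR) (by norm_num : (2:ℝ)⁻¹ < 1)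
      exact ⟨n, by rw [mul_comm]; exact (lt_div_iff₀ hR).mp hn⟩
    classical
    set n₀ := Nat.find hex with hn₀
    have hn₀pos : n₀ ≠ 0 := by
      intro h
      have := Nat.find_spec hex
      rw [← hn₀, h] at this
      simp at this
      linarith
    obtain ⟨m, hm⟩ := Nat.exists_eq_succ_of_ne_zero hn₀pos
    have h1 : ¬ (R * 2⁻¹ ^ m < ‖y - w‖) := Nat.find_min hex (by omega)
    have h2 : R * 2⁻¹ ^ (m + 1) < ‖y - w‖ := by
      have := Nat.find_spec hex
      rwa [← hn₀, hm] at this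
    refine Set.mem_iUnion.mpr ⟨m, ?_, ?_⟩
    · simpa [mem_closedBall, dist_eq_norm] using not_lt.mp h1
    · simp only [mem_ball, dist_eq_norm, not_lt]
      exact h2.le
  calc ∫⁻ y in closedBall w R, ENNReal.ofReal ‖y - w‖⁻¹
      ≤ ∫⁻ y in {w} ∪ ⋃ n : ℕ, (closedBall w (R * 2⁻¹ ^ n) \ ball w (R * 2⁻¹ ^ (n + 1))),
          ENNReal.ofReal ‖y - w‖⁻¹ := lintegral_mono_set hsub
    _ ≤ (∫⁻ y in {w}, ENNReal.ofReal ‖y - w‖⁻¹) +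
        ∑' n : ℕ, ∫⁻ y in (closedBall w (R * 2⁻¹ ^ n) \ ball w (R * 2⁻¹ ^ (n + 1))),
          ENNReal.ofReal ‖y - w‖⁻¹ := by
        refine le_trans (lintegral_union_le _ _ _) ?_
        exact add_le_add le_rfl (lintegral_iUnion_le _ _)
    _ ≤ 0 + ∑' n : ℕ, ENNReal.ofReal (2 * π * R * 2⁻¹ ^ n) := by
        refine add_le_add ?_ (ENNReal.tsum_le_tsum fun n => ?_)
        · have : volume ({w} : Set E2) = 0 := measure_singleton w
          simp [Measure.restrict_eq_zero.mpr this]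
        · have hRn : (0:ℝ) < R * 2⁻¹ ^ (n+1) := by positivity
          calc ∫⁻ y in (closedBall w (R * 2⁻¹ ^ n) \ ball w (R * 2⁻¹ ^ (n + 1))),
                ENNReal.ofReal ‖y - w‖⁻¹
              ≤ ∫⁻ _ in (closedBall w (R * 2⁻¹ ^ n) \ ball w (R * 2⁻¹ ^ (n + 1))),
                ENNReal.ofReal (R * 2⁻¹ ^ (n+1))⁻¹ := by
                refine setLIntegral_mono (by fun_prop) fun y hy => ?_
                refine ENNReal.ofReal_le_ofReal ?_
                have : R * 2⁻¹ ^ (n+1) ≤ ‖y - w‖ := by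
                  have := hy.2
                  simpa [mem_ball, dist_eq_norm, not_lt] using this
                exact inv_anti₀ hRn this
            _ = ENNReal.ofReal (R * 2⁻¹ ^ (n+1))⁻¹ *
                  volume (closedBall w (R * 2⁻¹ ^ n) \ ball w (R * 2⁻¹ ^ (n + 1))) := by
                rw [setLIntegral_const]
            _ ≤ ENNReal.ofReal (R * 2⁻¹ ^ (n+1))⁻¹ * volume (closedBall w (R * 2⁻¹ ^ n)) := by
                exact mul_le_mul_right (measure_mono Set.diff_subset) _
            _ = ENNReal.ofReal (2 * π * R * 2⁻¹ ^ n) := by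
                rw [vol_cb _ (by positivity), ← ENNReal.ofReal_mul (by positivity)]
                congr 1
                field_simp
                ring
    _ ≤ ENNReal.ofReal (4 * π * R) := by
        have heq : ∀ n : ℕ, ENNReal.ofReal (2 * π * R * 2⁻¹ ^ n) =
            ENNReal.ofReal (2 * π * R) * (ENNReal.ofReal 2⁻¹) ^ n := by
          intro n
          rw [ENNReal.ofReal_mul (by positivity), ENNReal.ofReal_pow (by norm_num)]
        rw [zero_add]
        simp_rw [heq]
        rw [ENNReal.tsum_mul_left, ENNReal.tsum_geometric]
        have h2 : ENNReal.ofReal (2⁻¹:ℝ) = 2⁻¹ := by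
          rw [ENNReal.ofReal_inv_of_pos (by norm_num)]; norm_num
        rw [h2, ENNReal.one_sub_inv_two, inv_inv]
        rw [show (4 * π * R) = (2 * π * R) * 2 by ring,
          ENNReal.ofReal_mul (by positivity : (0:ℝ) ≤ 2 * π * R), ENNReal.ofReal_ofNat]

lemma riesz_offcenter (z w : E2) {R : ℝ} (hR : 0 < R) :
    ∫⁻ y in closedBall z R, ENNReal.ofReal ‖y - w‖⁻¹ ≤ ENNReal.ofReal (5 * π * R) := by
  have hsub : closedBall z R ⊆ closedBall w R ∪ (closedBall z R \ closedBall w R) := by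
    intro y hy
    by_cases h : y ∈ closedBall w R
    · exact Set.mem_union_left _ h
    · exact Set.mem_union_right _ ⟨hy, h⟩
  calc ∫⁻ y in closedBall z R, ENNReal.ofReal ‖y - w‖⁻¹
      ≤ ∫⁻ y in closedBall w R ∪ (closedBall z R \ closedBall w R),
          ENNReal.ofReal ‖y - w‖⁻¹ := lintegral_mono_set hsub
    _ ≤ (∫⁻ y in closedBall w R, ENNReal.ofReal ‖y - w‖⁻¹) +
        ∫⁻ y in closedBall z R \ closedBall w R, ENNReal.ofReal ‖y - w‖⁻¹ :=
        lintegral_union_le _ _ _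
    _ ≤ ENNReal.ofReal (4 * π * R) + ENNReal.ofReal (π * R) := by
        refine add_le_add (riesz_centered w hR) ?_
        calc ∫⁻ y in closedBall z R \ closedBall w R, ENNReal.ofReal ‖y - w‖⁻¹
            ≤ ∫⁻ _ in closedBall z R \ closedBall w R, ENNReal.ofReal R⁻¹ := by
              refine setLIntegral_mono (by fun_prop) fun y hy => ?_
              refine ENNReal.ofReal_le_ofReal (inv_anti₀ hR ?_)
              have := hy.2
              simp only [mem_closedBall, dist_eq_norm, not_le] at this
              exact this.le
          _ = ENNReal.ofReal R⁻¹ * volume (closedBall z R \ closedBall w R) := setLIntegral_const _ _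
          _ ≤ ENNReal.ofReal R⁻¹ * volume (closedBall z R) :=
              mul_le_mul_right (measure_mono Set.diff_subset) _
          _ = ENNReal.ofReal (π * R) := by
              rw [vol_cb _ hR.le, ← ENNReal.ofReal_mul (by positivity)]
              congr 1
              field_simp
    _ = ENNReal.ofReal (5 * π * R) := by
        rw [← ENNReal.ofReal_add (by positivity) (by positivity)]
        congr 1
        ring

lemma norm_K (z : E2) : ‖K z‖ = (2 * π)⁻¹ * ‖z‖⁻¹ := by
  have hv : ‖(WithLp.equiv 2 (Fin 2 → ℝ)).symm ![-(z 1), z 0]‖ = ‖z‖ := by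
    rw [EuclideanSpace.norm_eq, EuclideanSpace.norm_eq]
    simp [Fin.sum_univ_two]
    ring_nf
  rcases eq_or_ne z 0 with rfl | hz
  · simp [K]
  · have hz' : (0:ℝ) < ‖z‖ := norm_pos_iff.mpr hz
    rw [K, norm_smul, hv, Real.norm_eq_abs, abs_of_nonneg (by positivity)]
    field_simp

lemma inversion_identity (x y : E2) (hx : x ≠ 0) (hy : y ≠ 0) :
    ‖x - (‖y‖ ^ 2)⁻¹ • y‖ * ‖y‖ = ‖y - (‖x‖ ^ 2)⁻¹ • x‖ * ‖x‖ := by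
  have hx' : (0:ℝ) < ‖x‖ := norm_pos_iff.mpr hx
  have hy' : (0:ℝ) < ‖y‖ := norm_pos_iff.mpr hy
  have key : (‖x - (‖y‖ ^ 2)⁻¹ • y‖ * ‖y‖) ^ 2 = (‖y - (‖x‖ ^ 2)⁻¹ • x‖ * ‖x‖) ^ 2 := by
    have h1 : ‖x - (‖y‖ ^ 2)⁻¹ • y‖ ^ 2 =
        ‖x‖ ^ 2 - 2 * ((‖y‖ ^ 2)⁻¹ * inner ℝ x y) + ((‖y‖ ^ 2)⁻¹) ^ 2 * ‖y‖ ^ 2 := by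
      rw [@norm_sub_sq_real E2, inner_smul_right, norm_smul, Real.norm_eq_abs,
        abs_of_nonneg (by positivity), mul_pow]
    have h2 : ‖y - (‖x‖ ^ 2)⁻¹ • x‖ ^ 2 =
        ‖y‖ ^ 2 - 2 * ((‖x‖ ^ 2)⁻¹ * inner ℝ y x) + ((‖x‖ ^ 2)⁻¹) ^ 2 * ‖x‖ ^ 2 := by
      rw [@norm_sub_sq_real E2, inner_smul_right, norm_smul, Real.norm_eq_abs,
        abs_of_nonneg (by positivity), mul_pow]
    rw [mul_pow, mul_pow, h1, h2, real_inner_comm x y]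
    field_simp
  have h3 := congrArg Real.sqrt key
  rwa [Real.sqrt_sq (by positivity), Real.sqrt_sq (by positivity)] at h3

/-- Near-field estimate for the Biot–Savart kernel `K_Ω(x,y) = K(x−y) − K(x−y*)` of the
exterior of the closed unit disk: for a smooth cutoff `a` with `0 ≤ a ≤ 1` supported in the
closed ball of radius `c`, with `a_ε(z) := a(z/ε)`,
`∫_{|y|>1} a_ε(x−y)‖K_Ω(x,y)‖ dy ≤ C(ε + ε²)`. Here `y* = y/|y|²`. -/
theorem aeps_KOmega_L1_bound (a : E2 → ℝ) (ha : ContDiff ℝ (⊤ : ℕ∞) a)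
    (ha0 : ∀ z, 0 ≤ a z) (ha1 : ∀ z, a z ≤ 1)
    (c : ℝ) (hc : 0 < c) (hsupp : Function.support a ⊆ Metric.closedBall 0 c) :
    ∃ C > 0, ∀ x : E2, 1 < ‖x‖ → ∀ ε > (0 : ℝ),
      ∫ y in {y : E2 | 1 < ‖y‖},
          a (ε⁻¹ • (x - y)) * ‖K (x - y) - K (x - (‖y‖ ^ 2)⁻¹ • y)‖ ≤
        C * (ε + ε ^ 2) := by
  refine ⟨5 * c + c ^ 2, by positivity, ?_⟩
  intro x hx ε hε
  set S : Set E2 := {y : E2 | 1 < ‖y‖} with hS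
  have hSm : MeasurableSet S := (isOpen_lt continuous_const continuous_norm).measurableSet
  set w : E2 := (‖x‖ ^ 2)⁻¹ • x with hw
  set R : ℝ := c * ε with hRdef
  have hR : 0 < R := by positivity
  have hnx : (0:ℝ) < ‖x‖ := lt_trans one_pos hx
  have hx0 : x ≠ 0 := norm_pos_iff.mp hnx
  have hwnorm : ‖w‖ = ‖x‖⁻¹ := by
    rw [hw, norm_smul, Real.norm_eq_abs, abs_of_nonneg (by positivity)]
    field_simp
  have hwle : ‖w‖ ≤ 1 := by
    rw [hwnorm]
    exact inv_le_one_of_one_le₀ hx.le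
  set h : E2 → ℝ := fun y => (2 * π)⁻¹ * (‖x - y‖⁻¹ + 1 + ‖y - w‖⁻¹) with hh
  have h_nonneg : ∀ y, 0 ≤ h y := fun y => by positivity
  have h_meas : Measurable h := by fun_prop
  set g : E2 → ℝ := (closedBall x R).indicator h with hg
  have g_nonneg : ∀ y, 0 ≤ g y := fun y =>
    Set.indicator_nonneg (fun z _ => h_nonneg z) y
  have g_meas : Measurable g := h_meas.indicator measurableSet_closedBall
  -- lintegral bound
  have key : ∫⁻ y, ENNReal.ofReal (g y) ≤ ENNReal.ofReal (5 * R + R ^ 2 / 2) := by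
    have hind : ∀ y, ENNReal.ofReal (g y) =
        (closedBall x R).indicator (fun z => ENNReal.ofReal (h z)) y := by
      intro y
      by_cases hy : y ∈ closedBall x R <;> simp [hg, Set.indicator_apply, hy]
    simp_rw [hind]
    rw [lintegral_indicator measurableSet_closedBall]
    have hsplit : ∀ y : E2, ENNReal.ofReal (h y) =
        ENNReal.ofReal ((2 * π)⁻¹) * (ENNReal.ofReal ‖x - y‖⁻¹ + ENNReal.ofReal 1 +
          ENNReal.ofReal ‖y - w‖⁻¹) := by
      intro y
      rw [hh]
      rw [ENNReal.ofReal_mul (by positivity), ENNReal.ofReal_add (by positivity) (by positivity),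
        ENNReal.ofReal_add (by positivity) (by norm_num)]
    simp_rw [hsplit]
    rw [lintegral_const_mul' _ _ ENNReal.ofReal_ne_top]
    rw [lintegral_add_right' _ (by fun_prop), lintegral_add_right' _ (by fun_prop)]
    have b1 : ∫⁻ y in closedBall x R, ENNReal.ofReal ‖x - y‖⁻¹ ≤ ENNReal.ofReal (5 * π * R) := by
      simp_rw [norm_sub_rev x]
      exact riesz_offcenter x x hR
    have b2 : ∫⁻ (_ : E2) in closedBall x R, ENNReal.ofReal (1:ℝ) = ENNReal.ofReal (π * R ^ 2) := by
      simp only [ENNReal.ofReal_one]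
      rw [setLIntegral_one, vol_cb _ hR.le]
    have b3 : ∫⁻ y in closedBall x R, ENNReal.ofReal ‖y - w‖⁻¹ ≤ ENNReal.ofReal (5 * π * R) :=
      riesz_offcenter x w hR
    calc ENNReal.ofReal ((2 * π)⁻¹) *
          ((∫⁻ y in closedBall x R, ENNReal.ofReal ‖x - y‖⁻¹) +
            (∫⁻ (_ : E2) in closedBall x R, ENNReal.ofReal (1:ℝ)) +
            ∫⁻ y in closedBall x R, ENNReal.ofReal ‖y - w‖⁻¹)
        ≤ ENNReal.ofReal ((2 * π)⁻¹) *
          (ENNReal.ofReal (5 * π * R) + ENNReal.ofReal (π * R ^ 2) + ENNReal.ofReal (5 * π * R)) := by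
          refine mul_le_mul_right ?_ _
          exact add_le_add (add_le_add b1 b2.le) b3
      _ = ENNReal.ofReal (5 * R + R ^ 2 / 2) := by
          rw [← ENNReal.ofReal_add (by positivity) (by positivity),
            ← ENNReal.ofReal_add (by positivity) (by positivity),
            ← ENNReal.ofReal_mul (by positivity)]
          congr 1
          field_simp
          ring
  have g_int : Integrable g := by
    refine ⟨g_meas.aestronglyMeasurable, ?_⟩
    rw [hasFiniteIntegral_iff_norm]
    simp_rw [Real.norm_of_nonneg (g_nonneg _)]
    exact lt_of_le_of_lt key ENNReal.ofReal_lt_top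
  -- pointwise domination on S
  have hfg : ∀ y ∈ S, a (ε⁻¹ • (x - y)) * ‖K (x - y) - K (x - (‖y‖ ^ 2)⁻¹ • y)‖ ≤ g y := by
    intro y hy
    by_cases hball : y ∈ closedBall x R
    · have hgy : g y = h y := Set.indicator_of_mem hball h
      have hyn : 1 < ‖y‖ := hy
      have hy0 : y ≠ 0 := norm_pos_iff.mp (lt_trans one_pos hyn)
      set B : ℝ := ‖y - w‖ with hB
      have hBpos : 0 < B := by
        have h1 : ‖y‖ - ‖w‖ ≤ B := norm_sub_norm_le y w
        linarith
      have hyB : ‖y‖ ≤ B + 1 := by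
        have h1 : ‖y‖ - ‖w‖ ≤ B := norm_sub_norm_le y w
        linarith
      set A : ℝ := ‖x - (‖y‖ ^ 2)⁻¹ • y‖ with hA
      have hid : A * ‖y‖ = B * ‖x‖ := inversion_identity x y hx0 hy0
      have hApos : 0 < A := by
        rcases (norm_nonneg (x - (‖y‖ ^ 2)⁻¹ • y)).lt_or_eq with h' | h'
        · exact h'
        · exfalso
          rw [← hA] at h'
          rw [← h'] at hid
          simp at hid
          rcases hid with h'' | h''
          · exact hBpos.ne' h''
          · exact hx0 h''
      have hkey : A⁻¹ ≤ 1 + B⁻¹ := by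
        have h2 : 1 ≤ (1 + B⁻¹) * A := by
          have e : (1 + B⁻¹) * A = (A * B + A) / B := by field_simp
          rw [e, le_div_iff₀ hBpos, one_mul]
          nlinarith [mul_le_mul_of_nonneg_left hyB hApos.le,
            mul_le_mul_of_nonneg_left hx.le hBpos.le]
        calc A⁻¹ = 1 / A := (one_div A).symm
          _ ≤ 1 + B⁻¹ := (div_le_iff₀ hApos).mpr h2
      calc a (ε⁻¹ • (x - y)) * ‖K (x - y) - K (x - (‖y‖ ^ 2)⁻¹ • y)‖
          ≤ 1 * ‖K (x - y) - K (x - (‖y‖ ^ 2)⁻¹ • y)‖ :=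
            mul_le_mul_of_nonneg_right (ha1 _) (norm_nonneg _)
        _ ≤ ‖K (x - y)‖ + ‖K (x - (‖y‖ ^ 2)⁻¹ • y)‖ := by
            rw [one_mul]; exact norm_sub_le _ _
        _ = (2 * π)⁻¹ * ‖x - y‖⁻¹ + (2 * π)⁻¹ * A⁻¹ := by rw [norm_K, norm_K]
        _ ≤ (2 * π)⁻¹ * ‖x - y‖⁻¹ + (2 * π)⁻¹ * (1 + B⁻¹) := by
            have : (0:ℝ) ≤ (2 * π)⁻¹ := by positivity
            nlinarith
        _ = h y := by rw [hh]; ring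
        _ = g y := hgy.symm
    · have hfar : R < ‖x - y‖ := by
        simp only [mem_closedBall, dist_eq_norm, not_le] at hball
        rwa [norm_sub_rev] at hball
      have hnot : ε⁻¹ • (x - y) ∉ Metric.closedBall (0:E2) c := by
        simp only [mem_closedBall, dist_zero_right, not_le, norm_smul, Real.norm_eq_abs,
          abs_of_pos (inv_pos.mpr hε)]
        rw [hRdef] at hfar
        calc c = ε⁻¹ * (c * ε) := by field_simp
          _ < ε⁻¹ * ‖x - y‖ := by
            exact mul_lt_mul_of_pos_left hfar (inv_pos.mpr hε)
      have haz : a (ε⁻¹ • (x - y)) = 0 := by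
        by_contra hne
        exact hnot (hsupp (Function.mem_support.mpr hne))
      rw [haz, zero_mul]
      exact g_nonneg y
  have step1 : ∫ y in S, a (ε⁻¹ • (x - y)) * ‖K (x - y) - K (x - (‖y‖ ^ 2)⁻¹ • y)‖ ≤
      ∫ y in S, g y := by
    refine integral_mono_of_nonneg ?_ g_int.restrict ?_
    · exact Filter.Eventually.of_forall fun y => mul_nonneg (ha0 _) (norm_nonneg _)
    · exact (ae_restrict_iff' hSm).mpr (Filter.Eventually.of_forall hfg)
  have step2 : ∫ y in S, g y ≤ ∫ y, g y :=
    setIntegral_le_integral g_int (Filter.Eventually.of_forall g_nonneg)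
  have step3 : ∫ y, g y ≤ 5 * R + R ^ 2 / 2 := by
    rw [integral_eq_lintegral_of_nonneg_ae (Filter.Eventually.of_forall g_nonneg)
      g_meas.aestronglyMeasurable]
    calc (∫⁻ y, ENNReal.ofReal (g y)).toReal
        ≤ (ENNReal.ofReal (5 * R + R ^ 2 / 2)).toReal :=
          ENNReal.toReal_mono ENNReal.ofReal_ne_top key
      _ = 5 * R + R ^ 2 / 2 := ENNReal.toReal_ofReal (by positivity)
  have final : 5 * R + R ^ 2 / 2 ≤ (5 * c + c ^ 2) * (ε + ε ^ 2) := by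
    rw [hRdef]
    nlinarith [mul_pos hc hε, sq_nonneg (c * ε), mul_pos (mul_pos hc hc) hε,
      mul_pos (mul_pos hc hε) hε]
  linarith

end
end

section
/- Let t₀ < t₁ be real numbers, let L : [t₀, t₁] → [0, ∞) be measurable, let γ : [t₀, t₁] → [0, ∞) be integrable, and let μ : [0, ∞) → [0, ∞) be continuous and nondecreasing with μ(0) = 0 and μ(r) > 0 for r > 0. Assume the Osgood condition ∫₀¹ dr/μ(r) = ∞, assume that s ↦ γ(s)·μ(L(s)) is integrable on [t₀, t₁], and assume that L(t) ≤ ∫_{t₀}^{t} γ(s)·μ(L(s)) ds for all t ∈ [t₀, t₁]. Then L(t) = 0 for every t ∈ [t₀, t₁]. -/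
/-!
Let `F t = ∫_{t₀}^t γ μ(L)`, so that `L ≤ F` and `F` is nondecreasing. Fix `ε > 0`. Over a short
interval `[x, u]`, continuity gives `μ(ε + F u) ≤ 2 μ(ε + F x)`, so the increment of `F` is at
most `2 μ(ε + F x) ∫_x^u γ`, while `1/μ ≤ 1/μ(ε + F x)` on `[ε + F x, ε + F u]`. Propagating this
along `[t₀, t]` gives `∫_ε^{ε + F t} dr/μ(r) ≤ 2 ∫_{t₀}^t γ`. The bound does not depend on `ε`,
so if `F t > 0` then `1/μ` would be integrable on `(0, F t]`, contradicting the Osgood condition.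
-/

open MeasureTheory Set Filter Topology

theorem antitoneOn_one_div {μ : ℝ → ℝ} {s : Set ℝ} (hmono : MonotoneOn μ s)
    (hpos : ∀ r ∈ s, 0 < μ r) : AntitoneOn (fun r => 1 / μ r) s :=
  fun _ hx _ hy hxy => one_div_le_one_div_of_le (hpos _ hx) (hmono hx hy hxy)

theorem ContinuousOn.le_left_of_eventually_nhdsGT_le {α β : Type*}
    [ConditionallyCompleteLinearOrder α] [TopologicalSpace α] [OrderTopology α]
    [DenselyOrdered α] [LinearOrder β] [TopologicalSpace β] [OrderClosedTopology β]
    {f : α → β} {a b : α} (hf : ContinuousOn f (Icc a b))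
    (h : ∀ x ∈ Ico a b, ∀ᶠ u in 𝓝[>] x, f u ≤ f x) : ∀ t ∈ Icc a b, f t ≤ f a := by
  have hclosed : IsClosed ({t | f t ≤ f a} ∩ Icc a b) := by
    rw [inter_comm]
    exact hf.preimage_isClosed_of_isClosed isClosed_Icc isClosed_Iic
  refine fun t ht => hclosed.Icc_subset_of_forall_mem_nhdsWithin le_rfl ?_ ht
  rintro x ⟨hxa, hx⟩
  exact (h x hx).mono fun u hu => hu.trans hxa

theorem monotoneOn_primitive_of_nonneg {f : ℝ → ℝ} {a b : ℝ} (hf : IntegrableOn f (Icc a b))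
    (hnn : ∀ t ∈ Icc a b, 0 ≤ f t) : MonotoneOn (fun t => ∫ s in a..t, f s) (Icc a b) := by
  intro x hx u hu hxu
  refine intervalIntegral.integral_mono_interval le_rfl hx.1 hxu ?_ ?_
  · filter_upwards [ae_restrict_mem measurableSet_Ioc] with s hs
    exact hnn s ⟨hs.1.le, hs.2.trans hu.2⟩
  · exact (hf.mono_set (uIcc_subset_Icc (left_mem_Icc.2 (hx.1.trans hx.2)) hu)).intervalIntegrable

theorem integral_one_div_le_of_monotoneOn {μ : ℝ → ℝ} {a b : ℝ} (hab : a ≤ b)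
    (hmono : MonotoneOn μ (Icc a b)) (ha : 0 < μ a) :
    ∫ r in a..b, 1 / μ r ≤ (b - a) / μ a := by
  have hle : ∀ r ∈ Icc a b, 1 / μ r ≤ 1 / μ a := fun r hr =>
    one_div_le_one_div_of_le ha (hmono (left_mem_Icc.2 hab) hr hr.1)
  have hanti : AntitoneOn (fun r => 1 / μ r) (Icc a b) :=
    antitoneOn_one_div hmono fun r hr => ha.trans_le (hmono (left_mem_Icc.2 hab) hr hr.1)
  calc ∫ r in a..b, 1 / μ r ≤ ∫ _ in a..b, 1 / μ a :=
        intervalIntegral.integral_mono_on hab (hanti.mono (uIcc_of_le hab).subset).intervalIntegrable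
          intervalIntegrable_const hle
    _ = (b - a) / μ a := by rw [intervalIntegral.integral_const, smul_eq_mul, mul_one_div]

theorem integral_one_div_le_two_mul_of_sub_le {G Γ μ : ℝ → ℝ} {a b : ℝ}
    (hG : ContinuousOn G (Icc a b)) (hGmono : MonotoneOn G (Icc a b))
    (hΓ : ContinuousOn Γ (Icc a b)) (hΓmono : MonotoneOn Γ (Icc a b))
    (hμ : ContinuousOn μ (Ici (G a))) (hμmono : MonotoneOn μ (Ici (G a))) (hμpos : 0 < μ (G a))
    (hGΓ : ∀ x ∈ Icc a b, ∀ u ∈ Icc x b, G u - G x ≤ μ (G u) * (Γ u - Γ x)) :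
    ∀ t ∈ Icc a b, ∫ r in G a..G t, 1 / μ r ≤ 2 * (Γ t - Γ a) := by
  intro t ht
  have hab : a ≤ b := ht.1.trans ht.2
  have hGa : ∀ x ∈ Icc a b, G a ≤ G x := fun x hx => hGmono (left_mem_Icc.2 hab) hx hx.1
  have hpos : ∀ r ∈ Ici (G a), 0 < μ r := fun r hr => hμpos.trans_le (hμmono self_mem_Ici hr hr)
  have hint : ∀ p q, G a ≤ p → G a ≤ q → IntervalIntegrable (fun r => 1 / μ r) volume p q :=
    fun p q hp hq => ((antitoneOn_one_div hμmono hpos).mono fun r hr =>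
      (le_min hp hq).trans hr.1).intervalIntegrable
  have hΦ : ContinuousOn (fun y => ∫ r in G a..y, 1 / μ r) (uIcc (G a) (G b)) :=
    intervalIntegral.continuousOn_primitive_interval'
      (hint _ _ le_rfl (hGa b (right_mem_Icc.2 hab))) left_mem_uIcc
  have hψ : ContinuousOn (fun t => (∫ r in G a..G t, 1 / μ r) - 2 * Γ t) (Icc a b) :=
    (hΦ.comp hG fun x hx => Icc_subset_uIcc ⟨hGa x hx, hGmono hx (right_mem_Icc.2 hab) hx.2⟩).sub
      (continuousOn_const.mul hΓ)
  have hstep : ∀ x ∈ Ico a b, ∀ᶠ u in 𝓝[>] x,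
      (∫ r in G a..G u, 1 / μ r) - 2 * Γ u ≤ (∫ r in G a..G x, 1 / μ r) - 2 * Γ x := by
    intro x hx
    have hxI : x ∈ Icc a b := Ico_subset_Icc_self hx
    have hμGx : 0 < μ (G x) := hpos _ (hGa x hxI)
    have hnear : ∀ᶠ u in 𝓝[>] x, μ (G u) < 2 * μ (G x) :=
      nhdsWithin_le_of_mem (Icc_mem_nhdsGT_of_mem hx)
        ((hμ.comp hG fun y hy => hGa y hy) x hxI |>.eventually (gt_mem_nhds (lt_two_mul_self hμGx)))
    filter_upwards [hnear, Ioc_mem_nhdsGT hx.2] with u hμGu hu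
    have huI : u ∈ Icc x b := ⟨hu.1.le, hu.2⟩
    have hxu : G x ≤ G u := hGmono hxI ⟨hx.1.trans hu.1.le, hu.2⟩ hu.1.le
    have hΓxu : 0 ≤ Γ u - Γ x := sub_nonneg.2 (hΓmono hxI ⟨hx.1.trans hu.1.le, hu.2⟩ hu.1.le)
    have hsplit : (∫ r in G a..G u, 1 / μ r) - ∫ r in G a..G x, 1 / μ r = ∫ r in G x..G u, 1 / μ r :=
      intervalIntegral.integral_interval_sub_left (hint _ _ le_rfl ((hGa x hxI).trans hxu))
        (hint _ _ le_rfl (hGa x hxI))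
    have hinc : ∫ r in G x..G u, 1 / μ r ≤ 2 * (Γ u - Γ x) :=
      calc ∫ r in G x..G u, 1 / μ r ≤ (G u - G x) / μ (G x) :=
            integral_one_div_le_of_monotoneOn hxu
              (hμmono.mono fun r hr => (hGa x hxI).trans hr.1) hμGx
        _ ≤ μ (G u) * (Γ u - Γ x) / μ (G x) := by gcongr; exact hGΓ x hxI u huI
        _ ≤ 2 * μ (G x) * (Γ u - Γ x) / μ (G x) := by gcongr
        _ = 2 * (Γ u - Γ x) := by field_simp
    linarith
  have := hψ.le_left_of_eventually_nhdsGT_le hstep t ht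
  simp only [intervalIntegral.integral_same] at this
  linarith

theorem integrableOn_Icc_one_div_of_monotoneOn {μ : ℝ → ℝ}
    (hμmono : MonotoneOn μ (Ioi 0)) (hμpos : ∀ r > (0 : ℝ), 0 < μ r) {a b : ℝ} (ha : 0 < a) :
    IntegrableOn (fun r => 1 / μ r) (Icc a b) :=
  (antitoneOn_one_div (hμmono.mono fun _ hr => ha.trans_le hr.1)
    fun r hr => hμpos r (ha.trans_le hr.1)).integrableOn_isCompact isCompact_Icc

theorem not_integrableOn_Ioc_zero_of_lintegral_eq_top {μ : ℝ → ℝ}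
    (hμmono : MonotoneOn μ (Ioi 0)) (hμpos : ∀ r > (0 : ℝ), 0 < μ r)
    (hOsgood : ∫⁻ r in Ioc (0 : ℝ) 1, ENNReal.ofReal (1 / μ r) = ⊤) {m : ℝ} (hm : 0 < m) :
    ¬ IntegrableOn (fun r => 1 / μ r) (Ioc 0 m) := by
  intro h
  have hIoc : IntegrableOn (fun r => 1 / μ r) (Ioc 0 1) :=
    (h.union (integrableOn_Icc_one_div_of_monotoneOn hμmono hμpos hm)).mono_set fun r hr =>
      (le_or_gt r m).imp (fun hrm => ⟨hr.1, hrm⟩) fun hmr => ⟨hmr.le, hr.2⟩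
  exact hIoc.lintegral_lt_top.ne hOsgood

theorem eq_zero_of_forall_integral_one_div_le {μ : ℝ → ℝ}
    (hμmono : MonotoneOn μ (Ioi 0)) (hμpos : ∀ r > (0 : ℝ), 0 < μ r)
    (hOsgood : ∫⁻ r in Ioc (0 : ℝ) 1, ENNReal.ofReal (1 / μ r) = ⊤) {m C : ℝ} (hm : 0 ≤ m)
    (h : ∀ ε > 0, ∫ r in ε..ε + m, 1 / μ r ≤ C) : m = 0 := by
  by_contra hne
  have hm : 0 < m := hm.lt_of_ne' hne
  set ε : ℕ → ℝ := fun n => m / (n + 1)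
  have hε : ∀ n, 0 < ε n := fun n => by positivity
  have hIoc : ∀ n b, IntegrableOn (fun r => 1 / μ r) (Ioc (ε n) b) := fun n _ =>
    (integrableOn_Icc_one_div_of_monotoneOn hμmono hμpos (hε n)).mono_set Ioc_subset_Icc_self
  have hbound : ∀ n, ∫ r in Ioc (ε n) m, ‖1 / μ r‖ ≤ C := by
    intro n
    have hnn : ∀ r ∈ Ioc (ε n) (ε n + m), 0 ≤ 1 / μ r := fun r hr =>
      (one_div_pos.2 (hμpos r ((hε n).trans hr.1))).le
    calc ∫ r in Ioc (ε n) m, ‖1 / μ r‖ = ∫ r in Ioc (ε n) m, 1 / μ r :=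
          setIntegral_congr_fun measurableSet_Ioc fun r hr =>
            Real.norm_of_nonneg (hnn r ⟨hr.1, hr.2.trans (by linarith [hε n])⟩)
      _ ≤ ∫ r in Ioc (ε n) (ε n + m), 1 / μ r :=
          setIntegral_mono_set (hIoc n _)
            ((ae_restrict_mem measurableSet_Ioc).mono hnn)
            (Ioc_subset_Ioc_right (by linarith [hε n])).eventuallyLE
      _ ≤ C := by
          rw [← intervalIntegral.integral_of_le (by linarith [hε n])]
          exact h _ (hε n)
  have hε_lim : Tendsto ε atTop (𝓝 0) := by
    simpa [ε, div_eq_mul_one_div m] using (tendsto_one_div_add_atTop_nhds_zero_nat.const_mul m)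
  exact not_integrableOn_Ioc_zero_of_lintegral_eq_top hμmono hμpos hOsgood hm
    (integrableOn_Ioc_of_intervalIntegral_norm_bounded
      (fun n => hIoc n m) hε_lim tendsto_const_nhds (Eventually.of_forall hbound))

theorem integral_sub_integral_le_mul {t₀ t₁ : ℝ} {L γ μ : ℝ → ℝ}
    (hLnn : ∀ t ∈ Icc t₀ t₁, 0 ≤ L t) (hγnn : ∀ t ∈ Icc t₀ t₁, 0 ≤ γ t)
    (hγint : IntegrableOn γ (Icc t₀ t₁)) (hμmono : MonotoneOn μ (Ici 0))
    (hint : IntegrableOn (fun s => γ s * μ (L s)) (Icc t₀ t₁))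
    {x u c : ℝ} (hx : x ∈ Icc t₀ t₁) (hu : u ∈ Icc x t₁) (hLc : ∀ s ∈ Icc x u, L s ≤ c) :
    (∫ s in t₀..u, γ s * μ (L s)) - ∫ s in t₀..x, γ s * μ (L s) ≤
      μ c * ((∫ s in t₀..u, γ s) - ∫ s in t₀..x, γ s) := by
  have huI : u ∈ Icc t₀ t₁ := ⟨hx.1.trans hu.1, hu.2⟩
  have ht₀ : t₀ ∈ Icc t₀ t₁ := left_mem_Icc.2 (hx.1.trans hx.2)
  have hii : ∀ {f : ℝ → ℝ}, IntegrableOn f (Icc t₀ t₁) → ∀ {p q}, p ∈ Icc t₀ t₁ → q ∈ Icc t₀ t₁ →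
      IntervalIntegrable f volume p q :=
    fun hf _ _ hp hq => (hf.mono_set (uIcc_subset_Icc hp hq)).intervalIntegrable
  rw [intervalIntegral.integral_interval_sub_left (hii hint ht₀ huI) (hii hint ht₀ hx),
    intervalIntegral.integral_interval_sub_left (hii hγint ht₀ huI) (hii hγint ht₀ hx),
    ← intervalIntegral.integral_const_mul]
  refine intervalIntegral.integral_mono_on hu.1 (hii hint hx huI)
    ((hii hγint hx huI).const_mul _) fun s hs => ?_
  have hsI : s ∈ Icc t₀ t₁ := ⟨hx.1.trans hs.1, hs.2.trans hu.2⟩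
  rw [mul_comm (μ c)]
  exact mul_le_mul_of_nonneg_left
    (hμmono (hLnn s hsI) ((hLnn s hsI).trans (hLc s hs)) (hLc s hs)) (hγnn s hsI)

theorem osgood_lemma_general (t₀ t₁ : ℝ) (L γ μ : ℝ → ℝ)
    (hLnn : ∀ t ∈ Set.Icc t₀ t₁, 0 ≤ L t)
    (hγnn : ∀ t ∈ Set.Icc t₀ t₁, 0 ≤ γ t) (hγint : IntegrableOn γ (Set.Icc t₀ t₁))
    (hμcont : ContinuousOn μ (Set.Ici 0)) (hμmono : MonotoneOn μ (Set.Ici 0))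
    (hμpos : ∀ r > (0 : ℝ), 0 < μ r)
    (hμnn : ∀ r ≥ (0 : ℝ), 0 ≤ μ r)
    (hOsgood : ∫⁻ r in Set.Ioc (0 : ℝ) 1, ENNReal.ofReal (1 / μ r) = ⊤)
    (hint : IntegrableOn (fun s => γ s * μ (L s)) (Set.Icc t₀ t₁))
    (hineq : ∀ t ∈ Set.Icc t₀ t₁, L t ≤ ∫ s in t₀..t, γ s * μ (L s)) :
    ∀ t ∈ Set.Icc t₀ t₁, L t = 0 := by
  intro t ht
  have ht₀ : t₀ ∈ Icc t₀ t₁ := left_mem_Icc.2 (ht.1.trans ht.2)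
  have hprim : ∀ {f : ℝ → ℝ}, IntegrableOn f (Icc t₀ t₁) →
      ContinuousOn (fun t => ∫ s in t₀..t, f s) (Icc t₀ t₁) := fun hf =>
    (intervalIntegral.continuousOn_primitive_interval
      (by rwa [uIcc_of_le (ht.1.trans ht.2)])).mono Icc_subset_uIcc
  set F : ℝ → ℝ := fun t => ∫ s in t₀..t, γ s * μ (L s)
  set Γ : ℝ → ℝ := fun t => ∫ s in t₀..t, γ s
  have hF₀ : F t₀ = 0 := intervalIntegral.integral_same
  have hFmono : MonotoneOn F (Icc t₀ t₁) := monotoneOn_primitive_of_nonneg hint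
    fun s hs => mul_nonneg (hγnn s hs) (hμnn _ (hLnn s hs))
  have hFnn : ∀ t ∈ Icc t₀ t₁, 0 ≤ F t := fun t ht => hF₀ ▸ hFmono ht₀ ht ht.1
  have hFt : F t = 0 := by
    refine eq_zero_of_forall_integral_one_div_le (hμmono.mono Ioi_subset_Ici_self) hμpos hOsgood
      (C := 2 * Γ t) (hFnn t ht) fun ε hε => ?_
    have hε₀ : 0 < ε + F t₀ := by rw [hF₀, add_zero]; exact hε
    have hstep : ∀ x ∈ Icc t₀ t₁, ∀ u ∈ Icc x t₁,
        (ε + F u) - (ε + F x) ≤ μ (ε + F u) * (Γ u - Γ x) := fun x hx u hu => by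
      have hu' : u ∈ Icc t₀ t₁ := ⟨hx.1.trans hu.1, hu.2⟩
      rw [add_sub_add_left_eq_sub]
      refine integral_sub_integral_le_mul hLnn hγnn hγint hμmono hint hx hu fun s hs => ?_
      have hs' : s ∈ Icc t₀ t₁ := ⟨hx.1.trans hs.1, hs.2.trans hu.2⟩
      calc L s ≤ F s := hineq s hs'
        _ ≤ F u := hFmono hs' hu' hs.2
        _ ≤ ε + F u := le_add_of_nonneg_left hε.le
    have := integral_one_div_le_two_mul_of_sub_le (continuousOn_const.add (hprim hint))
      (fun x hx y hy hxy => (add_le_add_iff_left ε).2 (hFmono hx hy hxy)) (hprim hγint)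
      (monotoneOn_primitive_of_nonneg hγint hγnn) (hμcont.mono (Ici_subset_Ici.2 hε₀.le))
      (hμmono.mono (Ici_subset_Ici.2 hε₀.le)) (hμpos _ hε₀) hstep t ht
    simpa [hF₀, Γ] using this
  exact le_antisymm ((hineq t ht).trans_eq hFt) (hLnn t ht)

/-- Osgood's lemma: if `L ≥ 0` is measurable on `[t₀, t₁]`, `γ ≥ 0` is integrable,
`μ` is a continuous nondecreasing modulus with `μ(0) = 0`, `μ > 0` on `(0, ∞)`, satisfying
the Osgood condition `∫₀¹ dr/μ(r) = ∞`, and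
`L(t) ≤ ∫_{t₀}^t γ(s) μ(L(s)) ds` for all `t ∈ [t₀, t₁]`, then `L ≡ 0` on `[t₀, t₁]`. -/
theorem osgood_lemma (t₀ t₁ : ℝ) (ht : t₀ < t₁) (L γ μ : ℝ → ℝ)
    (hLmeas : Measurable L) (hLnn : ∀ t ∈ Set.Icc t₀ t₁, 0 ≤ L t)
    (hγnn : ∀ t ∈ Set.Icc t₀ t₁, 0 ≤ γ t) (hγint : IntegrableOn γ (Set.Icc t₀ t₁))
    (hμcont : ContinuousOn μ (Set.Ici 0)) (hμmono : MonotoneOn μ (Set.Ici 0))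
    (hμ0 : μ 0 = 0) (hμpos : ∀ r > (0 : ℝ), 0 < μ r)
    (hμnn : ∀ r ≥ (0 : ℝ), 0 ≤ μ r)
    (hOsgood : ∫⁻ r in Set.Ioc (0 : ℝ) 1, ENNReal.ofReal (1 / μ r) = ⊤)
    (hint : IntegrableOn (fun s => γ s * μ (L s)) (Set.Icc t₀ t₁))
    (hineq : ∀ t ∈ Set.Icc t₀ t₁, L t ≤ ∫ s in t₀..t, γ s * μ (L s)) :
    ∀ t ∈ Set.Icc t₀ t₁, L t = 0 :=
  osgood_lemma_general t₀ t₁ L γ μ hLnn hγnn hγint hμcont hμmono hμpos hμnn hOsgood hint hineq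
end

section
/- Let T > 0, let L : [0, T] → [0, ∞) be measurable, let γ : [0, T] → [0, ∞) be integrable, and let μ : [0, ∞) → [0, ∞) be continuous and nondecreasing with μ(0) = 0 and μ(r) > 0 for r > 0. Let a > 0 and let Γ : [0, T] → ℝ satisfy Γ(t) ≥ a·t and ∫_{a·t}^{Γ(t)} ds/μ(s) = ∫₀^{t} γ(s) ds for every t ∈ [0, T]. Assume that s ↦ γ(s)·μ(L(s)) is integrable on [0, T] and that L(t) ≤ a·t + ∫₀^{t} γ(s)·μ(L(s)) ds for all t ∈ [0, T]. Then L(t) ≤ Γ(t) for all t ∈ [0, T]. -/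
open MeasureTheory Set Filter Topology intervalIntegral

/-!
Put `F t = a t + ∫₀ᵗ γ μ(L)` (`barrier`) and `M x = ∫₁ˣ ds / μ(s)` (`invPrimitive`), which is
strictly increasing on `(0, ∞)` with difference quotients between `1 / μ q` and `1 / μ p` on
`[p, q]`. For `ε > 0` the excess `ψ t = M (ε + F t) - M (ε + a t) - ∫₀ᵗ γ` vanishes at `0` and has
nonpositive upper right Dini derivative: on a short step `[x, z]` continuity of `F` gives
`L ≤ F ≤ ε + F x`, so `F` grows by at most `a (z - x) + μ (ε + F x) ∫ₓᶻ γ`, and dividing by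
`μ (ε + F x) ≥ μ (ε + a x)` leaves `∫ₓᶻ γ + o(z - x)`. Hence `ψ ≤ 0`, and letting `ε → 0` gives
`M (F t) - M (a t) ≤ ∫₀ᵗ γ = M (Γ t) - M (a t)`, so `L t ≤ F t ≤ Γ t`.
-/

theorem AntitoneOn.intervalIntegral_le_sub_mul {f : ℝ → ℝ} {p q : ℝ} (hpq : p ≤ q)
    (hf : AntitoneOn f (Icc p q)) : ∫ x in p..q, f x ≤ (q - p) * f p := by
  have hf' : AntitoneOn f (uIcc p q) := by rwa [uIcc_of_le hpq]
  calc ∫ x in p..q, f x ≤ ∫ _ in p..q, f p :=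
        integral_mono_on hpq hf'.intervalIntegrable intervalIntegrable_const
          fun x hx => hf (left_mem_Icc.2 hpq) hx hx.1
    _ = (q - p) * f p := by rw [intervalIntegral.integral_const, smul_eq_mul]

theorem AntitoneOn.sub_mul_le_intervalIntegral {f : ℝ → ℝ} {p q : ℝ} (hpq : p ≤ q)
    (hf : AntitoneOn f (Icc p q)) : (q - p) * f q ≤ ∫ x in p..q, f x := by
  have hf' : AntitoneOn f (uIcc p q) := by rwa [uIcc_of_le hpq]
  calc (q - p) * f q = ∫ _ in p..q, f q := by
        rw [intervalIntegral.integral_const, smul_eq_mul]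
    _ ≤ ∫ x in p..q, f x :=
        integral_mono_on hpq intervalIntegrable_const hf'.intervalIntegrable
          fun x hx => hf hx (right_mem_Icc.2 hpq) hx.2

theorem continuousOn_intervalIntegral_of_integrableOn_Icc {f : ℝ → ℝ} {a b : ℝ}
    (hf : IntegrableOn f (Icc a b)) : ContinuousOn (fun x => ∫ t in a..x, f t) (Icc a b) :=
  (continuousOn_primitive hf).congr fun _ hx => integral_of_le hx.1

theorem integral_sub_integral_of_integrableOn_Icc {f : ℝ → ℝ} {a b x z : ℝ}
    (hf : IntegrableOn f (Icc a b)) (hx : x ∈ Icc a b) (hz : z ∈ Icc a b) :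
    (∫ t in a..z, f t) - ∫ t in a..x, f t = ∫ t in x..z, f t :=
  have ha : a ∈ Icc a b := ⟨le_rfl, hx.1.trans hx.2⟩
  integral_interval_sub_left (hf.mono_set (uIcc_subset_Icc ha hz)).intervalIntegrable
    (hf.mono_set (uIcc_subset_Icc ha hx)).intervalIntegrable

theorem intervalIntegral_mul_le_of_le {γ μ L : ℝ → ℝ} {x z c : ℝ} (hxz : x ≤ z)
    (hμmono : MonotoneOn μ (Ici 0)) (hγnn : ∀ s ∈ Icc x z, 0 ≤ γ s)
    (hLnn : ∀ s ∈ Icc x z, 0 ≤ L s) (hLc : ∀ s ∈ Icc x z, L s ≤ c)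
    (hint : IntervalIntegrable (fun s => γ s * μ (L s)) volume x z)
    (hγint : IntervalIntegrable γ volume x z) :
    ∫ s in x..z, γ s * μ (L s) ≤ μ c * ∫ s in x..z, γ s := by
  rw [← intervalIntegral.integral_const_mul]
  refine integral_mono_on hxz hint (hγint.const_mul _) fun s hs => ?_
  rw [mul_comm (μ c)]
  exact mul_le_mul_of_nonneg_left
    (hμmono (hLnn s hs) ((hLnn s hs).trans (hLc s hs)) (hLc s hs)) (hγnn s hs)

namespace Osgood

noncomputable def invPrimitive (μ : ℝ → ℝ) (x : ℝ) : ℝ := ∫ s in (1 : ℝ)..x, (μ s)⁻¹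

section InvPrimitive

variable {μ : ℝ → ℝ}

theorem antitoneOn_inv (hμmono : MonotoneOn μ (Ioi 0)) (hμpos : ∀ r > (0 : ℝ), 0 < μ r) :
    AntitoneOn (fun s => (μ s)⁻¹) (Ioi 0) :=
  fun _ hx _ hy hxy => inv_anti₀ (hμpos _ hx) (hμmono hx hy hxy)

theorem intervalIntegrable_inv (hμmono : MonotoneOn μ (Ioi 0)) (hμpos : ∀ r > (0 : ℝ), 0 < μ r)
    {p q : ℝ} (hp : 0 < p) (hq : 0 < q) : IntervalIntegrable (fun s => (μ s)⁻¹) volume p q :=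
  ((antitoneOn_inv hμmono hμpos).mono fun _ hx =>
    (lt_min hp hq).trans_le hx.1).intervalIntegrable

theorem invPrimitive_sub (hμmono : MonotoneOn μ (Ioi 0)) (hμpos : ∀ r > (0 : ℝ), 0 < μ r)
    {p q : ℝ} (hp : 0 < p) (hq : 0 < q) :
    invPrimitive μ q - invPrimitive μ p = ∫ s in p..q, (μ s)⁻¹ :=
  integral_interval_sub_left (intervalIntegrable_inv hμmono hμpos one_pos hq)
    (intervalIntegrable_inv hμmono hμpos one_pos hp)

theorem invPrimitive_sub_le (hμmono : MonotoneOn μ (Ioi 0)) (hμpos : ∀ r > (0 : ℝ), 0 < μ r)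
    {p q : ℝ} (hp : 0 < p) (hpq : p ≤ q) :
    invPrimitive μ q - invPrimitive μ p ≤ (q - p) * (μ p)⁻¹ := by
  rw [invPrimitive_sub hμmono hμpos hp (hp.trans_le hpq)]
  exact AntitoneOn.intervalIntegral_le_sub_mul hpq
    ((antitoneOn_inv hμmono hμpos).mono fun _ hx => hp.trans_le hx.1)

theorem sub_mul_le_invPrimitive_sub (hμmono : MonotoneOn μ (Ioi 0))
    (hμpos : ∀ r > (0 : ℝ), 0 < μ r) {p q : ℝ} (hp : 0 < p) (hpq : p ≤ q) :
    (q - p) * (μ q)⁻¹ ≤ invPrimitive μ q - invPrimitive μ p := by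
  rw [invPrimitive_sub hμmono hμpos hp (hp.trans_le hpq)]
  exact AntitoneOn.sub_mul_le_intervalIntegral hpq
    ((antitoneOn_inv hμmono hμpos).mono fun _ hx => hp.trans_le hx.1)

theorem strictMonoOn_invPrimitive (hμmono : MonotoneOn μ (Ioi 0))
    (hμpos : ∀ r > (0 : ℝ), 0 < μ r) : StrictMonoOn (invPrimitive μ) (Ioi 0) := by
  intro p hp q hq hpq
  have hlower := sub_mul_le_invPrimitive_sub hμmono hμpos hp hpq.le
  have : 0 < (q - p) * (μ q)⁻¹ := mul_pos (sub_pos.2 hpq) (inv_pos.2 (hμpos q hq))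
  linarith

theorem continuousOn_invPrimitive (hμmono : MonotoneOn μ (Ioi 0))
    (hμpos : ∀ r > (0 : ℝ), 0 < μ r) : ContinuousOn (invPrimitive μ) (Ioi 0) := by
  intro x hx
  have hx' : 0 < x := hx
  have hwithin : ContinuousWithinAt (invPrimitive μ) (Icc (x / 2) (2 * x)) x :=
    continuousWithinAt_primitive (measure_singleton x) (intervalIntegrable_inv hμmono hμpos
      (lt_min one_pos (half_pos hx')) (lt_max_of_lt_left one_pos))
  exact (hwithin.continuousAt (Icc_mem_nhds (by linarith) (by linarith))).continuousWithinAt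

theorem le_of_forall_invPrimitive_sub_le (hμmono : MonotoneOn μ (Ioi 0))
    (hμpos : ∀ r > (0 : ℝ), 0 < μ r) {p q r : ℝ} (hp : 0 < p) (hpq : p ≤ q) (hpr : p ≤ r)
    (h : ∀ ε > 0, invPrimitive μ (ε + q) - invPrimitive μ (ε + p) ≤
      invPrimitive μ r - invPrimitive μ p) : q ≤ r := by
  have hM := continuousOn_invPrimitive hμmono hμpos
  have hcont : ContinuousAt (fun ε => invPrimitive μ (ε + q) - invPrimitive μ (ε + p)) 0 :=
    ((hM.continuousAt (Ioi_mem_nhds (by simpa using hp.trans_le hpq))).comp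
      (continuous_add_const q).continuousAt).sub
    ((hM.continuousAt (Ioi_mem_nhds (by simpa using hp))).comp
      (continuous_add_const p).continuousAt)
  have hlim : invPrimitive μ q - invPrimitive μ p ≤ invPrimitive μ r - invPrimitive μ p := by
    have hev : ∀ᶠ ε in 𝓝[>] (0 : ℝ), invPrimitive μ (ε + q) - invPrimitive μ (ε + p) ≤
        invPrimitive μ r - invPrimitive μ p := eventually_nhdsWithin_of_forall h
    simpa using le_of_tendsto (hcont.tendsto.mono_left nhdsWithin_le_nhds) hev
  exact ((strictMonoOn_invPrimitive hμmono hμpos).le_iff_le (hp.trans_le hpq)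
    (hp.trans_le hpr)).1 (by linarith)

end InvPrimitive

noncomputable def barrier (a : ℝ) (g : ℝ → ℝ) (t : ℝ) : ℝ := a * t + ∫ s in (0 : ℝ)..t, g s

section Barrier

variable {a T : ℝ} {g : ℝ → ℝ}

theorem barrier_zero : barrier a g 0 = 0 := by simp [barrier]

theorem barrier_sub (hg : IntegrableOn g (Icc 0 T)) {x z : ℝ} (hx : x ∈ Icc 0 T)
    (hz : z ∈ Icc 0 T) : barrier a g z - barrier a g x = a * (z - x) + ∫ s in x..z, g s := by
  rw [barrier, barrier, ← integral_sub_integral_of_integrableOn_Icc hg hx hz]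
  ring

theorem mul_le_barrier (hg_nn : ∀ s ∈ Icc 0 T, 0 ≤ g s) {t : ℝ} (ht : t ∈ Icc 0 T) :
    a * t ≤ barrier a g t :=
  le_add_of_nonneg_right (integral_nonneg ht.1 fun s hs => hg_nn s ⟨hs.1, hs.2.trans ht.2⟩)

theorem monotoneOn_barrier (ha : 0 ≤ a) (hg : IntegrableOn g (Icc 0 T))
    (hg_nn : ∀ s ∈ Icc 0 T, 0 ≤ g s) : MonotoneOn (barrier a g) (Icc 0 T) := by
  intro x hx z hz hxz
  have hinc := barrier_sub (a := a) hg hx hz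
  have hg_int_nn : 0 ≤ ∫ s in x..z, g s :=
    integral_nonneg hxz fun s hs => hg_nn s ⟨hx.1.trans hs.1, hs.2.trans hz.2⟩
  linarith [mul_nonneg ha (sub_nonneg.2 hxz)]

theorem continuousOn_barrier (hg : IntegrableOn g (Icc 0 T)) :
    ContinuousOn (barrier a g) (Icc 0 T) :=
  (continuousOn_const.mul continuousOn_id).add
    (continuousOn_intervalIntegral_of_integrableOn_Icc hg)

end Barrier

noncomputable def excess (a ε : ℝ) (γ μ L : ℝ → ℝ) (t : ℝ) : ℝ :=
  invPrimitive μ (ε + barrier a (fun s => γ s * μ (L s)) t) - invPrimitive μ (ε + a * t) -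
    ∫ s in (0 : ℝ)..t, γ s

section Excess

variable {L γ μ : ℝ → ℝ} {a ε T : ℝ}

theorem barrier_sub_mul_inv_le (ha : 0 ≤ a) (hε : 0 < ε) (hμmono : MonotoneOn μ (Ici 0))
    (hμpos : ∀ r > (0 : ℝ), 0 < μ r) (hγnn : ∀ t ∈ Icc 0 T, 0 ≤ γ t)
    (hγint : IntegrableOn γ (Icc 0 T)) (hLnn : ∀ t ∈ Icc 0 T, 0 ≤ L t)
    (hint : IntegrableOn (fun s => γ s * μ (L s)) (Icc 0 T))
    (hg_nn : ∀ t ∈ Icc 0 T, 0 ≤ γ t * μ (L t))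
    (hineq : ∀ t ∈ Icc 0 T, L t ≤ barrier a (fun s => γ s * μ (L s)) t)
    {x z : ℝ} (hx : x ∈ Icc 0 T) (hz : z ∈ Icc 0 T) (hxz : x ≤ z)
    (hclose : barrier a (fun s => γ s * μ (L s)) z ≤ ε + barrier a (fun s => γ s * μ (L s)) x) :
    (barrier a (fun s => γ s * μ (L s)) z - barrier a (fun s => γ s * μ (L s)) x) *
        (μ (ε + barrier a (fun s => γ s * μ (L s)) x))⁻¹ ≤
      a * (z - x) * (μ (ε + a * x))⁻¹ + ∫ s in x..z, γ s := by
  set F := barrier a (fun s => γ s * μ (L s))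
  have hsub : Icc x z ⊆ Icc 0 T := Icc_subset_Icc hx.1 hz.2
  have hax : 0 < ε + a * x := by nlinarith [hx.1]
  have hFx : a * x ≤ F x := mul_le_barrier hg_nn hx
  have hμF : 0 < μ (ε + F x) := hμpos _ (by linarith)
  have hgγ : (∫ s in x..z, γ s * μ (L s)) ≤ μ (ε + F x) * ∫ s in x..z, γ s :=
    intervalIntegral_mul_le_of_le hxz hμmono (fun s hs => hγnn s (hsub hs))
      (fun s hs => hLnn s (hsub hs))
      (fun s hs => (hineq s (hsub hs)).trans
        ((monotoneOn_barrier ha hint hg_nn (hsub hs) hz hs.2).trans hclose))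
      (hint.mono_set (uIcc_subset_Icc hx hz)).intervalIntegrable
      (hγint.mono_set (uIcc_subset_Icc hx hz)).intervalIntegrable
  have hinv : (μ (ε + F x))⁻¹ ≤ (μ (ε + a * x))⁻¹ :=
    inv_anti₀ (hμpos _ hax) (hμmono hax.le (show 0 ≤ ε + F x by linarith) (by linarith))
  rw [barrier_sub hint hx hz, add_mul]
  exact add_le_add (mul_le_mul_of_nonneg_left hinv (mul_nonneg ha (sub_nonneg.2 hxz)))
    ((mul_inv_le_iff₀ hμF).2 (by rw [mul_comm]; exact hgγ))

theorem excess_sub_le (ha : 0 ≤ a) (hε : 0 < ε) (hμmono : MonotoneOn μ (Ici 0))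
    (hμpos : ∀ r > (0 : ℝ), 0 < μ r) (hγnn : ∀ t ∈ Icc 0 T, 0 ≤ γ t)
    (hγint : IntegrableOn γ (Icc 0 T)) (hLnn : ∀ t ∈ Icc 0 T, 0 ≤ L t)
    (hint : IntegrableOn (fun s => γ s * μ (L s)) (Icc 0 T))
    (hg_nn : ∀ t ∈ Icc 0 T, 0 ≤ γ t * μ (L t))
    (hineq : ∀ t ∈ Icc 0 T, L t ≤ barrier a (fun s => γ s * μ (L s)) t)
    {x z : ℝ} (hx : x ∈ Icc 0 T) (hz : z ∈ Icc 0 T) (hxz : x ≤ z)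
    (hclose : barrier a (fun s => γ s * μ (L s)) z ≤ ε + barrier a (fun s => γ s * μ (L s)) x) :
    excess a ε γ μ L z - excess a ε γ μ L x ≤
      a * (z - x) * ((μ (ε + a * x))⁻¹ - (μ (ε + a * z))⁻¹) := by
  set F := barrier a (fun s => γ s * μ (L s))
  have hμmono' : MonotoneOn μ (Ioi 0) := hμmono.mono Ioi_subset_Ici_self
  have hax : 0 < ε + a * x := by nlinarith [hx.1]
  have hFx : a * x ≤ F x := mul_le_barrier hg_nn hx
  have hFxz : F x ≤ F z := monotoneOn_barrier ha hint hg_nn hx hz hxz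
  have hupper := invPrimitive_sub_le hμmono' hμpos (by linarith : 0 < ε + F x)
    (by linarith : ε + F x ≤ ε + F z)
  have hlower := sub_mul_le_invPrimitive_sub hμmono' hμpos hax
    (by nlinarith : ε + a * x ≤ ε + a * z)
  rw [add_sub_add_left_eq_sub] at hupper
  rw [add_sub_add_left_eq_sub, ← mul_sub] at hlower
  have hstep := barrier_sub_mul_inv_le ha hε hμmono hμpos hγnn hγint hLnn hint hg_nn hineq
    hx hz hxz hclose
  calc excess a ε γ μ L z - excess a ε γ μ L x
      = (invPrimitive μ (ε + F z) - invPrimitive μ (ε + F x)) -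
          (invPrimitive μ (ε + a * z) - invPrimitive μ (ε + a * x)) -
          ((∫ s in (0 : ℝ)..z, γ s) - ∫ s in (0 : ℝ)..x, γ s) := by unfold excess; ring
    _ ≤ (F z - F x) * (μ (ε + F x))⁻¹ - a * (z - x) * (μ (ε + a * z))⁻¹ -
          ∫ s in x..z, γ s := by
        rw [integral_sub_integral_of_integrableOn_Icc hγint hx hz]; linarith
    _ ≤ a * (z - x) * ((μ (ε + a * x))⁻¹ - (μ (ε + a * z))⁻¹) := by linarith

theorem continuousOn_excess (ha : 0 ≤ a) (hε : 0 < ε) (hμmono : MonotoneOn μ (Ici 0))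
    (hμpos : ∀ r > (0 : ℝ), 0 < μ r) (hγint : IntegrableOn γ (Icc 0 T))
    (hint : IntegrableOn (fun s => γ s * μ (L s)) (Icc 0 T))
    (hg_nn : ∀ t ∈ Icc 0 T, 0 ≤ γ t * μ (L t)) :
    ContinuousOn (excess a ε γ μ L) (Icc 0 T) := by
  have hM := continuousOn_invPrimitive (hμmono.mono Ioi_subset_Ici_self) hμpos
  have hpos : ∀ t ∈ Icc 0 T, 0 < ε + a * t := fun t ht => by nlinarith [ht.1]
  refine ((hM.comp (continuousOn_const.add (continuousOn_barrier hint)) fun t ht => ?_).sub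
    (hM.comp (by fun_prop) hpos)).sub (continuousOn_intervalIntegral_of_integrableOn_Icc hγint)
  show 0 < ε + barrier a _ t
  linarith [hpos t ht, mul_le_barrier (a := a) hg_nn ht]

theorem eventually_slope_excess_lt (ha : 0 ≤ a) (hε : 0 < ε) (hμcont : ContinuousOn μ (Ici 0))
    (hμmono : MonotoneOn μ (Ici 0))
    (hμpos : ∀ r > (0 : ℝ), 0 < μ r) (hγnn : ∀ t ∈ Icc 0 T, 0 ≤ γ t)
    (hγint : IntegrableOn γ (Icc 0 T)) (hLnn : ∀ t ∈ Icc 0 T, 0 ≤ L t)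
    (hint : IntegrableOn (fun s => γ s * μ (L s)) (Icc 0 T))
    (hg_nn : ∀ t ∈ Icc 0 T, 0 ≤ γ t * μ (L t))
    (hineq : ∀ t ∈ Icc 0 T, L t ≤ barrier a (fun s => γ s * μ (L s)) t)
    {x r : ℝ} (hx : x ∈ Ico 0 T) (hr : 0 < r) :
    ∀ᶠ z in 𝓝[>] x, slope (excess a ε γ μ L) x z < r := by
  set F := barrier a (fun s => γ s * μ (L s))
  have hxT : x ∈ Icc 0 T := Ico_subset_Icc_self hx
  have hIcc : Icc 0 T ∈ 𝓝[>] x := Icc_mem_nhdsGT_of_mem hx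
  have hFx : ∀ᶠ z in 𝓝[Icc 0 T] x, F z < ε + F x :=
    (continuousOn_barrier hint x hxT).eventually_lt_const (by linarith)
  have hclose : ∀ᶠ z in 𝓝[>] x, F z ≤ ε + F x :=
    (hFx.filter_mono (nhdsWithin_le_of_mem hIcc)).mono fun _ h => h.le
  have hax : 0 < ε + a * x := by nlinarith [hx.1]
  have hμx : ContinuousAt (fun z => μ (ε + a * z)) x :=
    (hμcont.continuousAt (Ici_mem_nhds hax)).comp (f := fun z => ε + a * z) (by fun_prop)
  have hcont : ContinuousAt (fun z => a * ((μ (ε + a * x))⁻¹ - (μ (ε + a * z))⁻¹)) x :=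
    continuousAt_const.mul (continuousAt_const.sub (hμx.inv₀ (hμpos _ hax).ne'))
  have hsmall : ∀ᶠ z in 𝓝[>] x, a * ((μ (ε + a * x))⁻¹ - (μ (ε + a * z))⁻¹) < r :=
    (hcont.tendsto.eventually_lt_const (by simpa using hr)).filter_mono nhdsWithin_le_nhds
  filter_upwards [hIcc, hclose, hsmall, self_mem_nhdsWithin] with z hz hzclose hzr hxz
  rw [slope_def_field, div_lt_iff₀ (sub_pos.2 hxz)]
  calc excess a ε γ μ L z - excess a ε γ μ L x
      ≤ a * (z - x) * ((μ (ε + a * x))⁻¹ - (μ (ε + a * z))⁻¹) :=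
        excess_sub_le ha hε hμmono hμpos hγnn hγint hLnn hint hg_nn hineq hxT hz hxz.le hzclose
    _ = a * ((μ (ε + a * x))⁻¹ - (μ (ε + a * z))⁻¹) * (z - x) := by ring
    _ < r * (z - x) := mul_lt_mul_of_pos_right hzr (sub_pos.2 hxz)

theorem excess_nonpos (ha : 0 ≤ a) (hε : 0 < ε) (hμcont : ContinuousOn μ (Ici 0))
    (hμmono : MonotoneOn μ (Ici 0))
    (hμpos : ∀ r > (0 : ℝ), 0 < μ r) (hγnn : ∀ t ∈ Icc 0 T, 0 ≤ γ t)
    (hγint : IntegrableOn γ (Icc 0 T)) (hLnn : ∀ t ∈ Icc 0 T, 0 ≤ L t)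
    (hint : IntegrableOn (fun s => γ s * μ (L s)) (Icc 0 T))
    (hg_nn : ∀ t ∈ Icc 0 T, 0 ≤ γ t * μ (L t))
    (hineq : ∀ t ∈ Icc 0 T, L t ≤ barrier a (fun s => γ s * μ (L s)) t)
    {t : ℝ} (ht : t ∈ Icc 0 T) : excess a ε γ μ L t ≤ 0 :=
  image_le_of_liminf_slope_right_le_deriv_boundary
    (continuousOn_excess ha hε hμmono hμpos hγint hint hg_nn) (B := fun _ => 0) (B' := fun _ => 0)
    (by simp [excess, barrier_zero]) continuousOn_const (fun x _ => hasDerivWithinAt_const x _ 0)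
    (fun _ hx _ hr => (eventually_slope_excess_lt ha hε hμcont hμmono hμpos hγnn hγint hLnn hint
      hg_nn hineq hx hr).frequently) ht

end Excess

end Osgood

theorem osgood_comparison_general (T : ℝ) (L γ μ Γ : ℝ → ℝ) (a : ℝ) (ha : 0 < a)
    (hLnn : ∀ t ∈ Set.Icc 0 T, 0 ≤ L t)
    (hγnn : ∀ t ∈ Set.Icc 0 T, 0 ≤ γ t) (hγint : IntegrableOn γ (Set.Icc 0 T))
    (hμcont : ContinuousOn μ (Set.Ici 0)) (hμmono : MonotoneOn μ (Set.Ici 0))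
    (hμpos : ∀ r > (0 : ℝ), 0 < μ r) (hμnn : ∀ r ≥ (0 : ℝ), 0 ≤ μ r)
    (hΓ : ∀ t ∈ Set.Icc 0 T, a * t ≤ Γ t ∧
      ∫ s in (a * t)..(Γ t), (μ s)⁻¹ = ∫ s in (0 : ℝ)..t, γ s)
    (hint : IntegrableOn (fun s => γ s * μ (L s)) (Set.Icc 0 T))
    (hineq : ∀ t ∈ Set.Icc 0 T, L t ≤ a * t + ∫ s in (0 : ℝ)..t, γ s * μ (L s)) :
    ∀ t ∈ Set.Icc 0 T, L t ≤ Γ t := by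
  intro t ht
  obtain ⟨hΓt, hΓint⟩ := hΓ t ht
  rcases ht.1.eq_or_lt with rfl | ht0
  · calc L 0 ≤ 0 := by simpa using hineq 0 ht
      _ ≤ Γ 0 := by simpa using hΓt
  have hg_nn : ∀ s ∈ Icc 0 T, 0 ≤ γ s * μ (L s) :=
    fun s hs => mul_nonneg (hγnn s hs) (hμnn _ (hLnn s hs))
  have hμmono' : MonotoneOn μ (Ioi 0) := hμmono.mono Ioi_subset_Ici_self
  have hat : 0 < a * t := mul_pos ha ht0
  refine (hineq t ht).trans (Osgood.le_of_forall_invPrimitive_sub_le hμmono' hμpos hat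
    (Osgood.mul_le_barrier hg_nn ht) hΓt fun ε hε => ?_)
  rw [Osgood.invPrimitive_sub hμmono' hμpos hat (hat.trans_le hΓt), hΓint]
  exact sub_nonpos.1 (Osgood.excess_nonpos ha.le hε hμcont hμmono hμpos hγnn hγint hLnn hint
    hg_nn hineq ht)

/-- Comparison form of Osgood's lemma: if `L(t) ≤ a·t + ∫₀ᵗ γ(s) μ(L(s)) ds` on `[0, T]`
and `Γ` satisfies `Γ(t) ≥ a·t` together with `∫_{a·t}^{Γ(t)} ds/μ(s) = ∫₀ᵗ γ(s) ds`,
then `L ≤ Γ` on `[0, T]`. -/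
theorem osgood_comparison (T : ℝ) (hT : 0 < T) (L γ μ Γ : ℝ → ℝ) (a : ℝ) (ha : 0 < a)
    (hLmeas : Measurable L) (hLnn : ∀ t ∈ Set.Icc 0 T, 0 ≤ L t)
    (hγnn : ∀ t ∈ Set.Icc 0 T, 0 ≤ γ t) (hγint : IntegrableOn γ (Set.Icc 0 T))
    (hμcont : ContinuousOn μ (Set.Ici 0)) (hμmono : MonotoneOn μ (Set.Ici 0))
    (hμ0 : μ 0 = 0) (hμpos : ∀ r > (0 : ℝ), 0 < μ r) (hμnn : ∀ r ≥ (0 : ℝ), 0 ≤ μ r)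
    (hΓ : ∀ t ∈ Set.Icc 0 T, a * t ≤ Γ t ∧
      ∫ s in (a * t)..(Γ t), (μ s)⁻¹ = ∫ s in (0 : ℝ)..t, γ s)
    (hint : IntegrableOn (fun s => γ s * μ (L s)) (Set.Icc 0 T))
    (hineq : ∀ t ∈ Set.Icc 0 T, L t ≤ a * t + ∫ s in (0 : ℝ)..t, γ s * μ (L s)) :
    ∀ t ∈ Set.Icc 0 T, L t ≤ Γ t :=
  osgood_comparison_general T L γ μ Γ a ha hLnn hγnn hγint hμcont hμmono hμpos hμnn hΓ hint hineq
end
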